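/- arXiv:1806.08659 — 7 statements merged into one kernel-verified Lean document; each statement's English description precedes it below -/
import Mathlib

section
/- For all real x with 0 < x < π, sin(x)/x ≤ exp(-x²/6). -/
open Real

/-- If `F 0 = 0` and `F' = f ≥ 0` on `[0, ∞)`, then `F x ≥ 0` for `x ≥ 0`. -/
lemma aux_nonneg {F f : ℝ → ℝ} (h : ∀ t, HasDerivAt F (f t) t)
    (hf : ∀ t, 0 ≤ t → 0 ≤ f t) (hF0 : F 0 = 0) {x : ℝ} (hx : 0 ≤ x) : 0 ≤ F x := by
  have hdiff : Differentiable ℝ F := fun t => (h t).differentiableAt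
  have hm : MonotoneOn F (Set.Ici 0) := by
    apply monotoneOn_of_deriv_nonneg (convex_Ici 0) hdiff.continuous.continuousOn
      (hdiff.differentiableOn.mono interior_subset)
    intro t ht
    rw [interior_Ici] at ht
    rw [(h t).deriv]
    exact hf t ht.le
  calc (0:ℝ) = F 0 := hF0.symm
    _ ≤ F x := hm Set.self_mem_Ici hx hx

lemma sin_ge_3 {x : ℝ} (hx : 0 ≤ x) : x - x ^ 3 / 6 ≤ Real.sin x := by
  have := aux_nonneg (F := fun t => Real.sin t - (t - t ^ 3 / 6))
    (f := fun t => Real.cos t - (1 - t ^ 2 / 2))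
    (fun t => ((Real.hasDerivAt_sin t).sub ((hasDerivAt_id' (x := t)).sub
      ((hasDerivAt_pow 3 t).div_const 6))).congr_deriv (by push_cast; ring))
    (fun t _ => sub_nonneg.2 Real.one_sub_sq_div_two_le_cos)
    (by simp) hx
  linarith [this]

lemma cos_le_4 {x : ℝ} (hx : 0 ≤ x) : Real.cos x ≤ 1 - x ^ 2 / 2 + x ^ 4 / 24 := by
  have := aux_nonneg (F := fun t => (1 - t ^ 2 / 2 + t ^ 4 / 24) - Real.cos t)
    (f := fun t => Real.sin t - (t - t ^ 3 / 6))
    (fun t => ((((hasDerivAt_const t (1:ℝ)).sub ((hasDerivAt_pow 2 t).div_const 2)).add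
      ((hasDerivAt_pow 4 t).div_const 24)).sub (Real.hasDerivAt_cos t)).congr_deriv
      (by push_cast; ring))
    (fun t ht => sub_nonneg.2 (sin_ge_3 ht))
    (by simp) hx
  linarith [this]

lemma sin_le_5 {x : ℝ} (hx : 0 ≤ x) : Real.sin x ≤ x - x ^ 3 / 6 + x ^ 5 / 120 := by
  have := aux_nonneg (F := fun t => (t - t ^ 3 / 6 + t ^ 5 / 120) - Real.sin t)
    (f := fun t => (1 - t ^ 2 / 2 + t ^ 4 / 24) - Real.cos t)
    (fun t => (((((hasDerivAt_id' (x := t))).sub ((hasDerivAt_pow 3 t).div_const 6)).add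
      ((hasDerivAt_pow 5 t).div_const 120)).sub (Real.hasDerivAt_sin t)).congr_deriv
      (by push_cast; ring))
    (fun t ht => sub_nonneg.2 (cos_le_4 ht))
    (by simp) hx
  linarith [this]

lemma cos_ge_6 {x : ℝ} (hx : 0 ≤ x) :
    1 - x ^ 2 / 2 + x ^ 4 / 24 - x ^ 6 / 720 ≤ Real.cos x := by
  have := aux_nonneg (F := fun t => Real.cos t - (1 - t ^ 2 / 2 + t ^ 4 / 24 - t ^ 6 / 720))
    (f := fun t => (t - t ^ 3 / 6 + t ^ 5 / 120) - Real.sin t)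
    (fun t => ((Real.hasDerivAt_cos t).sub ((((hasDerivAt_const t (1:ℝ)).sub
      ((hasDerivAt_pow 2 t).div_const 2)).add ((hasDerivAt_pow 4 t).div_const 24)).sub
      ((hasDerivAt_pow 6 t).div_const 720))).congr_deriv (by push_cast; ring))
    (fun t ht => sub_nonneg.2 (sin_le_5 ht))
    (by simp) hx
  linarith [this]

lemma sin_ge_7 {x : ℝ} (hx : 0 ≤ x) :
    x - x ^ 3 / 6 + x ^ 5 / 120 - x ^ 7 / 5040 ≤ Real.sin x := by
  have := aux_nonneg
    (F := fun t => Real.sin t - (t - t ^ 3 / 6 + t ^ 5 / 120 - t ^ 7 / 5040))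
    (f := fun t => Real.cos t - (1 - t ^ 2 / 2 + t ^ 4 / 24 - t ^ 6 / 720))
    (fun t => ((Real.hasDerivAt_sin t).sub (((((hasDerivAt_id' (x := t))).sub
      ((hasDerivAt_pow 3 t).div_const 6)).add ((hasDerivAt_pow 5 t).div_const 120)).sub
      ((hasDerivAt_pow 7 t).div_const 5040))).congr_deriv (by push_cast; ring))
    (fun t ht => sub_nonneg.2 (cos_ge_6 ht))
    (by simp) hx
  linarith [this]

lemma cos_le_8 {x : ℝ} (hx : 0 ≤ x) :
    Real.cos x ≤ 1 - x ^ 2 / 2 + x ^ 4 / 24 - x ^ 6 / 720 + x ^ 8 / 40320 := by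
  have := aux_nonneg
    (F := fun t => (1 - t ^ 2 / 2 + t ^ 4 / 24 - t ^ 6 / 720 + t ^ 8 / 40320) - Real.cos t)
    (f := fun t => Real.sin t - (t - t ^ 3 / 6 + t ^ 5 / 120 - t ^ 7 / 5040))
    (fun t => ((((((hasDerivAt_const t (1:ℝ)).sub ((hasDerivAt_pow 2 t).div_const 2)).add
      ((hasDerivAt_pow 4 t).div_const 24)).sub ((hasDerivAt_pow 6 t).div_const 720)).add
      ((hasDerivAt_pow 8 t).div_const 40320)).sub (Real.hasDerivAt_cos t)).congr_deriv
      (by push_cast; ring))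
    (fun t ht => sub_nonneg.2 (sin_ge_7 ht))
    (by simp) hx
  linarith [this]

lemma sin_le_9 {x : ℝ} (hx : 0 ≤ x) :
    Real.sin x ≤ x - x ^ 3 / 6 + x ^ 5 / 120 - x ^ 7 / 5040 + x ^ 9 / 362880 := by
  have := aux_nonneg
    (F := fun t => (t - t ^ 3 / 6 + t ^ 5 / 120 - t ^ 7 / 5040 + t ^ 9 / 362880) - Real.sin t)
    (f := fun t => (1 - t ^ 2 / 2 + t ^ 4 / 24 - t ^ 6 / 720 + t ^ 8 / 40320) - Real.cos t)
    (fun t => (((((((hasDerivAt_id' (x := t))).sub ((hasDerivAt_pow 3 t).div_const 6)).add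
      ((hasDerivAt_pow 5 t).div_const 120)).sub ((hasDerivAt_pow 7 t).div_const 5040)).add
      ((hasDerivAt_pow 9 t).div_const 362880)).sub (Real.hasDerivAt_sin t)).congr_deriv
      (by push_cast; ring))
    (fun t ht => sub_nonneg.2 (cos_le_8 ht))
    (by simp) hx
  linarith [this]

lemma hasDerivAt_exp_neg (t : ℝ) :
    HasDerivAt (fun t : ℝ => Real.exp (-t)) (-Real.exp (-t)) t := by
  simpa [Function.comp_def] using (Real.hasDerivAt_exp (-t)).comp t (hasDerivAt_id' (x := t)).neg

lemma exp_neg_ge_1 {t : ℝ} (ht : 0 ≤ t) : 1 - t ≤ Real.exp (-t) := by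
  have := Real.add_one_le_exp (-t); linarith

lemma exp_neg_le_2 {t : ℝ} (ht : 0 ≤ t) : Real.exp (-t) ≤ 1 - t + t ^ 2 / 2 := by
  have := aux_nonneg (F := fun t => (1 - t + t ^ 2 / 2) - Real.exp (-t))
    (f := fun t => Real.exp (-t) - (1 - t))
    (fun t => ((((hasDerivAt_const t (1:ℝ)).sub (hasDerivAt_id' (x := t))).add
      ((hasDerivAt_pow 2 t).div_const 2)).sub (hasDerivAt_exp_neg t)).congr_deriv
      (by push_cast; ring))
    (fun t ht => sub_nonneg.2 (exp_neg_ge_1 ht))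
    (by simp) ht
  linarith [this]

lemma exp_neg_ge_3 {t : ℝ} (ht : 0 ≤ t) : 1 - t + t ^ 2 / 2 - t ^ 3 / 6 ≤ Real.exp (-t) := by
  have := aux_nonneg (F := fun t => Real.exp (-t) - (1 - t + t ^ 2 / 2 - t ^ 3 / 6))
    (f := fun t => (1 - t + t ^ 2 / 2) - Real.exp (-t))
    (fun t => ((hasDerivAt_exp_neg t).sub ((((hasDerivAt_const t (1:ℝ)).sub
      (hasDerivAt_id' (x := t))).add ((hasDerivAt_pow 2 t).div_const 2)).sub
      ((hasDerivAt_pow 3 t).div_const 6))).congr_deriv (by push_cast; ring))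
    (fun t ht => sub_nonneg.2 (exp_neg_le_2 ht))
    (by simp) ht
  linarith [this]

lemma exp_neg_le_4 {t : ℝ} (ht : 0 ≤ t) :
    Real.exp (-t) ≤ 1 - t + t ^ 2 / 2 - t ^ 3 / 6 + t ^ 4 / 24 := by
  have := aux_nonneg
    (F := fun t => (1 - t + t ^ 2 / 2 - t ^ 3 / 6 + t ^ 4 / 24) - Real.exp (-t))
    (f := fun t => Real.exp (-t) - (1 - t + t ^ 2 / 2 - t ^ 3 / 6))
    (fun t => (((((hasDerivAt_const t (1:ℝ)).sub (hasDerivAt_id' (x := t))).add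
      ((hasDerivAt_pow 2 t).div_const 2)).sub ((hasDerivAt_pow 3 t).div_const 6)).add
      ((hasDerivAt_pow 4 t).div_const 24) |>.sub (hasDerivAt_exp_neg t)).congr_deriv
      (by push_cast; ring))
    (fun t ht => sub_nonneg.2 (exp_neg_ge_3 ht))
    (by simp) ht
  linarith [this]

lemma exp_neg_ge_5 {t : ℝ} (ht : 0 ≤ t) :
    1 - t + t ^ 2 / 2 - t ^ 3 / 6 + t ^ 4 / 24 - t ^ 5 / 120 ≤ Real.exp (-t) := by
  have := aux_nonneg
    (F := fun t => Real.exp (-t) - (1 - t + t ^ 2 / 2 - t ^ 3 / 6 + t ^ 4 / 24 - t ^ 5 / 120))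
    (f := fun t => (1 - t + t ^ 2 / 2 - t ^ 3 / 6 + t ^ 4 / 24) - Real.exp (-t))
    (fun t => ((hasDerivAt_exp_neg t).sub (((((hasDerivAt_const t (1:ℝ)).sub
      (hasDerivAt_id' (x := t))).add ((hasDerivAt_pow 2 t).div_const 2)).sub
      ((hasDerivAt_pow 3 t).div_const 6)).add ((hasDerivAt_pow 4 t).div_const 24) |>.sub
      ((hasDerivAt_pow 5 t).div_const 120))).congr_deriv (by push_cast; ring))
    (fun t ht => sub_nonneg.2 (exp_neg_le_4 ht))
    (by simp) ht
  linarith [this]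

theorem sin_div_le_gaussian (x : ℝ) (hx : 0 < x) (hxπ : x < π) :
    Real.sin x / x ≤ Real.exp (-x ^ 2 / 6) := by
  have hx2 : x ^ 2 < 3.15 ^ 2 := by
    have := Real.pi_lt_d2
    nlinarith
  have ht : (0:ℝ) ≤ x ^ 2 / 6 := by positivity
  have hexp : 1 - x ^ 2 / 6 + (x ^ 2 / 6) ^ 2 / 2 - (x ^ 2 / 6) ^ 3 / 6 + (x ^ 2 / 6) ^ 4 / 24
      - (x ^ 2 / 6) ^ 5 / 120 ≤ Real.exp (-(x ^ 2 / 6)) := exp_neg_ge_5 ht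
  have hsin := sin_le_9 hx.le
  have hpoly : x - x ^ 3 / 6 + x ^ 5 / 120 - x ^ 7 / 5040 + x ^ 9 / 362880 ≤
      x * (1 - x ^ 2 / 6 + (x ^ 2 / 6) ^ 2 / 2 - (x ^ 2 / 6) ^ 3 / 6 + (x ^ 2 / 6) ^ 4 / 24
        - (x ^ 2 / 6) ^ 5 / 120) := by
    nlinarith [pow_pos hx 5, pow_pos hx 2, sq_nonneg (x ^ 2 - 5), sq_nonneg (x ^ 3 - 5 * x),
      pow_pos hx 7, pow_pos hx 9, mul_pos (pow_pos hx 5) (pow_pos hx 2)]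
  have key : Real.sin x ≤ x * Real.exp (-(x ^ 2 / 6)) := by
    calc Real.sin x ≤ x - x ^ 3 / 6 + x ^ 5 / 120 - x ^ 7 / 5040 + x ^ 9 / 362880 := hsin
      _ ≤ x * (1 - x ^ 2 / 6 + (x ^ 2 / 6) ^ 2 / 2 - (x ^ 2 / 6) ^ 3 / 6 + (x ^ 2 / 6) ^ 4 / 24
          - (x ^ 2 / 6) ^ 5 / 120) := hpoly
      _ ≤ x * Real.exp (-(x ^ 2 / 6)) := by
          exact mul_le_mul_of_nonneg_left hexp hx.le
  rw [div_le_iff₀ hx, neg_div]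
  calc Real.sin x ≤ x * Real.exp (-(x ^ 2 / 6)) := key
    _ = Real.exp (-(x ^ 2 / 6)) * x := mul_comm _ _
end

section
/- For all real x with 0 < x < π, sin(x)/x ≤ exp(-x²/6 - x⁴/180). -/
open Real

private lemma nonneg_of_hasDerivAt (f g : ℝ → ℝ) (hf : ∀ y, HasDerivAt f (g y) y)
    (h0 : f 0 = 0) (hg : ∀ y, 0 ≤ y → 0 ≤ g y) {x : ℝ} (hx : 0 ≤ x) : 0 ≤ f x := by
  have hmono : MonotoneOn f (Set.Ici 0) := by
    apply monotoneOn_of_deriv_nonneg (convex_Ici 0)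
    · exact (Differentiable.continuous fun y => (hf y).differentiableAt).continuousOn
    · exact fun y _ => (hf y).differentiableAt.differentiableWithinAt
    · intro y hy
      rw [(hf y).deriv]
      exact hg y (le_of_lt (by simpa using hy))
  calc (0:ℝ) = f 0 := h0.symm
    _ ≤ f x := hmono Set.self_mem_Ici hx hx

private lemma exp_neg_aux : ∀ y : ℝ, HasDerivAt (fun s : ℝ => Real.exp (-s)) (-Real.exp (-y)) y := by
  intro y
  have h := (Real.hasDerivAt_exp (-y)).comp y ((hasDerivAt_id y).neg)
  exact h.congr_deriv (by simp)

-- exp(-s) ≥ degree-7 Taylor polynomial for s ≥ 0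
private lemma exp_neg_ge_E7 {s : ℝ} (hs : 0 ≤ s) :
    1 - s + s^2/2 - s^3/6 + s^4/24 - s^5/120 + s^6/720 - s^7/5040 ≤ Real.exp (-s) := by
  have h1 : ∀ u : ℝ, 0 ≤ u → 0 ≤ Real.exp (-u) - (1 - u) := by
    intro u _
    have := Real.add_one_le_exp (-u)
    linarith
  have h2 : ∀ u : ℝ, 0 ≤ u → 0 ≤ (1 - u + u^2/2) - Real.exp (-u) := by
    apply nonneg_of_hasDerivAt _ (fun u => Real.exp (-u) - (1 - u))
    · intro y
      have hp : HasDerivAt (fun u : ℝ => 1 - u + u^2/2) (0 - 1 + (2*y^1)/2) y :=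
        (((hasDerivAt_const y (1:ℝ)).sub (hasDerivAt_id y)).add ((hasDerivAt_pow 2 y).div_const 2))
      have := hp.sub (exp_neg_aux y)
      exact this.congr_deriv (by ring)
    · norm_num
    · exact h1
  have h3 : ∀ u : ℝ, 0 ≤ u → 0 ≤ Real.exp (-u) - (1 - u + u^2/2 - u^3/6) := by
    apply nonneg_of_hasDerivAt _ (fun u => (1 - u + u^2/2) - Real.exp (-u))
    · intro y
      have hp : HasDerivAt (fun u : ℝ => 1 - u + u^2/2 - u^3/6)
          (0 - 1 + (2*y^1)/2 - (3*y^2)/6) y :=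
        ((((hasDerivAt_const y (1:ℝ)).sub (hasDerivAt_id y)).add
          ((hasDerivAt_pow 2 y).div_const 2)).sub ((hasDerivAt_pow 3 y).div_const 6))
      have := (exp_neg_aux y).sub hp
      exact this.congr_deriv (by ring)
    · norm_num
    · exact h2
  have h4 : ∀ u : ℝ, 0 ≤ u → 0 ≤ (1 - u + u^2/2 - u^3/6 + u^4/24) - Real.exp (-u) := by
    apply nonneg_of_hasDerivAt _ (fun u => Real.exp (-u) - (1 - u + u^2/2 - u^3/6))
    · intro y
      have hp : HasDerivAt (fun u : ℝ => 1 - u + u^2/2 - u^3/6 + u^4/24)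
          (0 - 1 + (2*y^1)/2 - (3*y^2)/6 + (4*y^3)/24) y :=
        (((((hasDerivAt_const y (1:ℝ)).sub (hasDerivAt_id y)).add
          ((hasDerivAt_pow 2 y).div_const 2)).sub ((hasDerivAt_pow 3 y).div_const 6)).add
          ((hasDerivAt_pow 4 y).div_const 24))
      have := hp.sub (exp_neg_aux y)
      exact this.congr_deriv (by ring)
    · norm_num
    · exact h3
  have h5 : ∀ u : ℝ, 0 ≤ u → 0 ≤ Real.exp (-u) - (1 - u + u^2/2 - u^3/6 + u^4/24 - u^5/120) := by
    apply nonneg_of_hasDerivAt _ (fun u => (1 - u + u^2/2 - u^3/6 + u^4/24) - Real.exp (-u))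
    · intro y
      have hp : HasDerivAt (fun u : ℝ => 1 - u + u^2/2 - u^3/6 + u^4/24 - u^5/120)
          (0 - 1 + (2*y^1)/2 - (3*y^2)/6 + (4*y^3)/24 - (5*y^4)/120) y :=
        ((((((hasDerivAt_const y (1:ℝ)).sub (hasDerivAt_id y)).add
          ((hasDerivAt_pow 2 y).div_const 2)).sub ((hasDerivAt_pow 3 y).div_const 6)).add
          ((hasDerivAt_pow 4 y).div_const 24)).sub ((hasDerivAt_pow 5 y).div_const 120))
      have := (exp_neg_aux y).sub hp
      exact this.congr_deriv (by ring)
    · norm_num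
    · exact h4
  have h6 : ∀ u : ℝ, 0 ≤ u →
      0 ≤ (1 - u + u^2/2 - u^3/6 + u^4/24 - u^5/120 + u^6/720) - Real.exp (-u) := by
    apply nonneg_of_hasDerivAt _
      (fun u => Real.exp (-u) - (1 - u + u^2/2 - u^3/6 + u^4/24 - u^5/120))
    · intro y
      have hp : HasDerivAt (fun u : ℝ => 1 - u + u^2/2 - u^3/6 + u^4/24 - u^5/120 + u^6/720)
          (0 - 1 + (2*y^1)/2 - (3*y^2)/6 + (4*y^3)/24 - (5*y^4)/120 + (6*y^5)/720) y :=
        (((((((hasDerivAt_const y (1:ℝ)).sub (hasDerivAt_id y)).add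
          ((hasDerivAt_pow 2 y).div_const 2)).sub ((hasDerivAt_pow 3 y).div_const 6)).add
          ((hasDerivAt_pow 4 y).div_const 24)).sub ((hasDerivAt_pow 5 y).div_const 120)).add
          ((hasDerivAt_pow 6 y).div_const 720))
      have := hp.sub (exp_neg_aux y)
      exact this.congr_deriv (by ring)
    · norm_num
    · exact h5
  have h7 : ∀ u : ℝ, 0 ≤ u →
      0 ≤ Real.exp (-u) - (1 - u + u^2/2 - u^3/6 + u^4/24 - u^5/120 + u^6/720 - u^7/5040) := by
    apply nonneg_of_hasDerivAt _
      (fun u => (1 - u + u^2/2 - u^3/6 + u^4/24 - u^5/120 + u^6/720) - Real.exp (-u))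
    · intro y
      have hp : HasDerivAt
          (fun u : ℝ => 1 - u + u^2/2 - u^3/6 + u^4/24 - u^5/120 + u^6/720 - u^7/5040)
          (0 - 1 + (2*y^1)/2 - (3*y^2)/6 + (4*y^3)/24 - (5*y^4)/120 + (6*y^5)/720
            - (7*y^6)/5040) y :=
        ((((((((hasDerivAt_const y (1:ℝ)).sub (hasDerivAt_id y)).add
          ((hasDerivAt_pow 2 y).div_const 2)).sub ((hasDerivAt_pow 3 y).div_const 6)).add
          ((hasDerivAt_pow 4 y).div_const 24)).sub ((hasDerivAt_pow 5 y).div_const 120)).add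
          ((hasDerivAt_pow 6 y).div_const 720)).sub ((hasDerivAt_pow 7 y).div_const 5040))
      have := (exp_neg_aux y).sub hp
      exact this.congr_deriv (by ring)
    · norm_num
    · exact h6
  have := h7 s hs
  linarith

-- sin x ≤ degree-9 Taylor polynomial for x ≥ 0
private lemma sin_le_S9 {x : ℝ} (hx : 0 ≤ x) :
    Real.sin x ≤ x - x^3/6 + x^5/120 - x^7/5040 + x^9/362880 := by
  have s3 : ∀ y : ℝ, 0 ≤ y → 0 ≤ Real.sin y - (y - y^3/6) := by
    apply nonneg_of_hasDerivAt _ (fun y => Real.cos y - (1 - y^2/2))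
    · intro y
      have hp : HasDerivAt (fun y : ℝ => y - y^3/6) (1 - (3*y^2)/6) y :=
        ((hasDerivAt_id y).sub ((hasDerivAt_pow 3 y).div_const 6))
      have := (Real.hasDerivAt_sin y).sub hp
      exact this.congr_deriv (by ring)
    · simp
    · intro y _
      have := Real.one_sub_sq_div_two_le_cos (x := y)
      linarith
  have c4 : ∀ y : ℝ, 0 ≤ y → 0 ≤ (1 - y^2/2 + y^4/24) - Real.cos y := by
    apply nonneg_of_hasDerivAt _ (fun y => Real.sin y - (y - y^3/6))
    · intro y
      have hp : HasDerivAt (fun y : ℝ => 1 - y^2/2 + y^4/24)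
          (0 - (2*y^1)/2 + (4*y^3)/24) y :=
        (((hasDerivAt_const y (1:ℝ)).sub ((hasDerivAt_pow 2 y).div_const 2)).add
          ((hasDerivAt_pow 4 y).div_const 24))
      have := hp.sub (Real.hasDerivAt_cos y)
      exact this.congr_deriv (by ring)
    · simp
    · exact s3
  have s5 : ∀ y : ℝ, 0 ≤ y → 0 ≤ (y - y^3/6 + y^5/120) - Real.sin y := by
    apply nonneg_of_hasDerivAt _ (fun y => (1 - y^2/2 + y^4/24) - Real.cos y)
    · intro y
      have hp : HasDerivAt (fun y : ℝ => y - y^3/6 + y^5/120)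
          (1 - (3*y^2)/6 + (5*y^4)/120) y :=
        (((hasDerivAt_id y).sub ((hasDerivAt_pow 3 y).div_const 6)).add
          ((hasDerivAt_pow 5 y).div_const 120))
      have := hp.sub (Real.hasDerivAt_sin y)
      exact this.congr_deriv (by ring)
    · simp
    · exact c4
  have c6 : ∀ y : ℝ, 0 ≤ y → 0 ≤ Real.cos y - (1 - y^2/2 + y^4/24 - y^6/720) := by
    apply nonneg_of_hasDerivAt _ (fun y => (y - y^3/6 + y^5/120) - Real.sin y)
    · intro y
      have hp : HasDerivAt (fun y : ℝ => 1 - y^2/2 + y^4/24 - y^6/720)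
          (0 - (2*y^1)/2 + (4*y^3)/24 - (6*y^5)/720) y :=
        ((((hasDerivAt_const y (1:ℝ)).sub ((hasDerivAt_pow 2 y).div_const 2)).add
          ((hasDerivAt_pow 4 y).div_const 24)).sub ((hasDerivAt_pow 6 y).div_const 720))
      have := (Real.hasDerivAt_cos y).sub hp
      exact this.congr_deriv (by ring)
    · simp
    · exact s5
  have s7 : ∀ y : ℝ, 0 ≤ y → 0 ≤ Real.sin y - (y - y^3/6 + y^5/120 - y^7/5040) := by
    apply nonneg_of_hasDerivAt _ (fun y => Real.cos y - (1 - y^2/2 + y^4/24 - y^6/720))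
    · intro y
      have hp : HasDerivAt (fun y : ℝ => y - y^3/6 + y^5/120 - y^7/5040)
          (1 - (3*y^2)/6 + (5*y^4)/120 - (7*y^6)/5040) y :=
        ((((hasDerivAt_id y).sub ((hasDerivAt_pow 3 y).div_const 6)).add
          ((hasDerivAt_pow 5 y).div_const 120)).sub ((hasDerivAt_pow 7 y).div_const 5040))
      have := (Real.hasDerivAt_sin y).sub hp
      exact this.congr_deriv (by ring)
    · simp
    · exact c6
  have c8 : ∀ y : ℝ, 0 ≤ y → 0 ≤ (1 - y^2/2 + y^4/24 - y^6/720 + y^8/40320) - Real.cos y := by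
    apply nonneg_of_hasDerivAt _ (fun y => Real.sin y - (y - y^3/6 + y^5/120 - y^7/5040))
    · intro y
      have hp : HasDerivAt (fun y : ℝ => 1 - y^2/2 + y^4/24 - y^6/720 + y^8/40320)
          (0 - (2*y^1)/2 + (4*y^3)/24 - (6*y^5)/720 + (8*y^7)/40320) y :=
        (((((hasDerivAt_const y (1:ℝ)).sub ((hasDerivAt_pow 2 y).div_const 2)).add
          ((hasDerivAt_pow 4 y).div_const 24)).sub ((hasDerivAt_pow 6 y).div_const 720)).add
          ((hasDerivAt_pow 8 y).div_const 40320))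
      have := hp.sub (Real.hasDerivAt_cos y)
      exact this.congr_deriv (by ring)
    · simp
    · exact s7
  have s9 : ∀ y : ℝ, 0 ≤ y →
      0 ≤ (y - y^3/6 + y^5/120 - y^7/5040 + y^9/362880) - Real.sin y := by
    apply nonneg_of_hasDerivAt _
      (fun y => (1 - y^2/2 + y^4/24 - y^6/720 + y^8/40320) - Real.cos y)
    · intro y
      have hp : HasDerivAt (fun y : ℝ => y - y^3/6 + y^5/120 - y^7/5040 + y^9/362880)
          (1 - (3*y^2)/6 + (5*y^4)/120 - (7*y^6)/5040 + (9*y^8)/362880) y :=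
        (((((hasDerivAt_id y).sub ((hasDerivAt_pow 3 y).div_const 6)).add
          ((hasDerivAt_pow 5 y).div_const 120)).sub ((hasDerivAt_pow 7 y).div_const 5040)).add
          ((hasDerivAt_pow 9 y).div_const 362880))
      have := hp.sub (Real.hasDerivAt_sin y)
      exact this.congr_deriv (by ring)
    · simp
    · exact c8
  have := s9 x hx
  linarith

private lemma Qpos (u : ℝ) (hu0 : 0 ≤ u) (hu : u ≤ 10) :
    0 ≤ 1/2835 - 11/340200*u + 1/1555200*u^2 + 31/839808000*u^3 - 67/35271936000*u^4
      - 1/37791360000*u^5 - 1/906992640000*u^6 - 7/17006112000000*u^7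
      - 19/816293376000000*u^8 - 7/12244400640000000*u^9 - 1/146932807680000000*u^10
      - 1/30855889612800000000*u^11 := by
  have p1 : (0:ℝ) ≤ u^2 := pow_nonneg hu0 2
  have p2 : (0:ℝ) ≤ u^3 := pow_nonneg hu0 3
  have h1 : u^2 ≤ 10*u := by nlinarith
  have h2 : u^3 ≤ 10*u^2 := by nlinarith
  have h3 : u^4 ≤ 10*u^3 := by nlinarith [pow_nonneg hu0 3]
  have h4 : u^5 ≤ 10*u^4 := by nlinarith [pow_nonneg hu0 4]
  have h5 : u^6 ≤ 10*u^5 := by nlinarith [pow_nonneg hu0 5]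
  have h6 : u^7 ≤ 10*u^6 := by nlinarith [pow_nonneg hu0 6]
  have h7 : u^8 ≤ 10*u^7 := by nlinarith [pow_nonneg hu0 7]
  have h8 : u^9 ≤ 10*u^8 := by nlinarith [pow_nonneg hu0 8]
  have h9 : u^10 ≤ 10*u^9 := by nlinarith [pow_nonneg hu0 9]
  have h10 : u^11 ≤ 10*u^10 := by nlinarith [pow_nonneg hu0 10]
  linarith

theorem sin_div_le_gaussian_quartic (x : ℝ) (hx : 0 < x) (hxπ : x < π) :
    Real.sin x / x ≤ Real.exp (-x ^ 2 / 6 - x ^ 4 / 180) := by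
  set s : ℝ := x^2/6 + x^4/180 with hs_def
  have hs : 0 ≤ s := by positivity
  have hexp : 1 - s + s^2/2 - s^3/6 + s^4/24 - s^5/120 + s^6/720 - s^7/5040 ≤ Real.exp (-s) :=
    exp_neg_ge_E7 hs
  have hsin : Real.sin x ≤ x - x^3/6 + x^5/120 - x^7/5040 + x^9/362880 := sin_le_S9 hx.le
  have hu : x^2 ≤ 10 := by
    have hπ : π < 3.15 := Real.pi_lt_d2
    nlinarith
  have hQ := Qpos (x^2) (sq_nonneg x) hu
  have hx7 : 0 ≤ x^7 * (1/2835 - 11/340200*(x^2) + 1/1555200*(x^2)^2 + 31/839808000*(x^2)^3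
      - 67/35271936000*(x^2)^4 - 1/37791360000*(x^2)^5 - 1/906992640000*(x^2)^6
      - 7/17006112000000*(x^2)^7 - 19/816293376000000*(x^2)^8 - 7/12244400640000000*(x^2)^9
      - 1/146932807680000000*(x^2)^10 - 1/30855889612800000000*(x^2)^11) :=
    mul_nonneg (pow_nonneg hx.le 7) hQ
  have hkey : x - x^3/6 + x^5/120 - x^7/5040 + x^9/362880
      ≤ x * (1 - s + s^2/2 - s^3/6 + s^4/24 - s^5/120 + s^6/720 - s^7/5040) := by
    rw [hs_def]
    nlinarith [hx7]
  have hmul : x * (1 - s + s^2/2 - s^3/6 + s^4/24 - s^5/120 + s^6/720 - s^7/5040)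
      ≤ x * Real.exp (-s) := mul_le_mul_of_nonneg_left hexp hx.le
  have hfin : Real.sin x ≤ x * Real.exp (-s) := by linarith
  have heq : -x ^ 2 / 6 - x ^ 4 / 180 = -s := by rw [hs_def]; ring
  rw [heq, div_le_iff₀ hx]
  linarith [hfin]
end

section
/- lim_{p→∞} f(p) = √(3/π), where f(p) := √(p/2)·(2/π)·∫₀^∞ |sin(t)/t|^p dt. -/
open Real Filter MeasureTheory Set Topology

lemma nonneg_of_deriv (f f' : ℝ → ℝ) (hf : ∀ x, HasDerivAt f (f' x) x)
    (h0 : f 0 = 0) (hd : ∀ x, 0 ≤ x → 0 ≤ f' x) : ∀ x, 0 ≤ x → 0 ≤ f x := by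
  intro x hx
  have hm : MonotoneOn f (Ici 0) := by
    apply monotoneOn_of_deriv_nonneg (convex_Ici 0)
      (fun y hy => (hf y).continuousAt.continuousWithinAt)
      (fun y hy => (hf y).differentiableAt.differentiableWithinAt)
    intro y hy
    rw [interior_Ici] at hy
    rw [(hf y).deriv]
    exact hd y hy.le
  have := hm (self_mem_Ici) hx hx
  linarith [h0 ▸ this]

lemma sin_ge_poly (x : ℝ) (hx : 0 ≤ x) : x - x^3/6 ≤ Real.sin x := by
  have := nonneg_of_deriv (fun x => Real.sin x - x + x^3/6) (fun x => Real.cos x - 1 + x^2/2)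
    (fun x => by
      have h : HasDerivAt (fun x : ℝ => Real.sin x - x + x^3/6) _ x := ((Real.hasDerivAt_sin x).sub (hasDerivAt_id x)).add
        ((hasDerivAt_pow 3 x).div_const 6)
      convert h using 1; push_cast; ring) (by simp)
    (fun x hx => by nlinarith [Real.one_sub_sq_div_two_le_cos (x := x)]) x hx
  · push_cast at this; linarith

lemma cos_le_poly (x : ℝ) (hx : 0 ≤ x) : Real.cos x ≤ 1 - x^2/2 + x^4/24 := by
  have := nonneg_of_deriv (fun x => 1 - x^2/2 + x^4/24 - Real.cos x)
    (fun x => -x + x^3/6 + Real.sin x)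
    (fun x => by
      have h : HasDerivAt (fun x : ℝ => 1 - x^2/2 + x^4/24 - Real.cos x)
          _ x := ((((hasDerivAt_pow 2 x).div_const 2).const_sub 1).add
          ((hasDerivAt_pow 4 x).div_const 24)).sub (Real.hasDerivAt_cos x)
      convert h using 1; push_cast; ring) (by simp)
    (fun x hx => by nlinarith [sin_ge_poly x hx]) x hx
  linarith

lemma sin_le_poly (x : ℝ) (hx : 0 ≤ x) : Real.sin x ≤ x - x^3/6 + x^5/120 := by
  have := nonneg_of_deriv (fun x => x - x^3/6 + x^5/120 - Real.sin x)
    (fun x => 1 - x^2/2 + x^4/24 - Real.cos x)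
    (fun x => by
      have h : HasDerivAt (fun x : ℝ => x - x^3/6 + x^5/120 - Real.sin x)
          _ x := (((hasDerivAt_id x).sub ((hasDerivAt_pow 3 x).div_const 6)).add
          ((hasDerivAt_pow 5 x).div_const 120)).sub (Real.hasDerivAt_sin x)
      convert h using 1; push_cast; ring) (by simp)
    (fun x hx => by nlinarith [cos_le_poly x hx]) x hx
  linarith

lemma log_lim (a b : ℝ) (ha : a < 0) :
    Tendsto (fun p : ℝ => p * Real.log (1 + (a/p + b/p^2))) atTop (nhds a) := by
  set c : ℝ → ℝ := fun p => a/p + b/p^2 with hc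
  have hc0 : Tendsto c atTop (nhds 0) := by
    have h1 : Tendsto (fun p : ℝ => a/p) atTop (nhds 0) := tendsto_const_nhds.div_atTop tendsto_id
    have h2 : Tendsto (fun p : ℝ => b/p^2) atTop (nhds 0) :=
      tendsto_const_nhds.div_atTop (tendsto_pow_atTop (by norm_num))
    simpa using h1.add h2
  have hev : ∀ᶠ p in atTop, c p < 0 ∧ -2⁻¹ < c p := by
    filter_upwards [eventually_ge_atTop (max 1 ((|b|+1)/(-a))),
      eventually_ge_atTop (2*(|b|-a)+1)] with p h1 h2
    have hp1 : (1:ℝ) ≤ p := le_trans (le_max_left _ _) h1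
    have hp0 : (0:ℝ) < p := by linarith
    have hpa : (|b|+1)/(-a) ≤ p := le_trans (le_max_right _ _) h1
    have hab : |b| + 1 ≤ p * (-a) := (div_le_iff₀ (by linarith)).mp hpa
    have hb1 : -|b| ≤ b := neg_abs_le b
    have hb2 : b ≤ |b| := le_abs_self b
    have hceq : c p = (a*p + b)/p^2 := by rw [hc]; field_simp
    constructor
    · rw [hceq]
      apply div_neg_of_neg_of_pos _ (by positivity)
      nlinarith
    · rw [hceq, lt_div_iff₀ (by positivity)]
      nlinarith [mul_le_mul_of_nonneg_left h2 hp0.le,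
        mul_nonneg (sub_nonneg.2 hp1) (abs_nonneg b)]
  have hslope : Tendsto (fun p : ℝ => Real.log (1 + c p) / c p) atTop (nhds 1) := by
    have hd : HasDerivAt Real.log 1 1 := by simpa using Real.hasDerivAt_log one_ne_zero
    have hs := hasDerivAt_iff_tendsto_slope.mp hd
    have hcomp : Tendsto (fun p : ℝ => 1 + c p) atTop (𝓝[≠] 1) := by
      apply tendsto_nhdsWithin_of_tendsto_nhds_of_eventually_within
      · simpa using tendsto_const_nhds.add hc0
      · filter_upwards [hev] with p hp
        simp only [mem_compl_iff, mem_singleton_iff]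
        intro h
        have : c p = 0 := by linarith
        linarith [hp.1]
    have := hs.comp hcomp
    apply this.congr
    intro p
    simp [slope, Real.log_one, inv_mul_eq_div]
  have key : Tendsto (fun p : ℝ => (p * c p) * (Real.log (1 + c p) / c p)) atTop
      (nhds (a * 1)) := by
    apply Tendsto.mul _ hslope
    have : (fun p : ℝ => p * c p) =ᶠ[atTop] fun p => a + b/p := by
      filter_upwards [eventually_gt_atTop 0] with p hp
      rw [hc]
      field_simp
    rw [tendsto_congr' this]
    simpa using tendsto_const_nhds.add (tendsto_const_nhds.div_atTop (tendsto_id (α := ℝ)))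
  have heq : (fun p : ℝ => (p * c p) * (Real.log (1 + c p) / c p)) =ᶠ[atTop]
      (fun p : ℝ => p * Real.log (1 + (a/p + b/p^2))) := by
    filter_upwards [hev] with p hp
    have hne : c p ≠ 0 := ne_of_lt hp.1
    have : (p * c p) * (Real.log (1 + c p) / c p) = p * Real.log (1 + c p) := by
      field_simp
    rw [this, hc]
  exact (tendsto_congr' heq).mp (by simpa using key)

-- substitution
lemma subst_lemma (p : ℝ) (hp : 0 < p) :
    ∫ u in Ioi (0:ℝ), (Ioc (0:ℝ) (2 * Real.sqrt p)).indicator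
      (fun u => |Real.sin (u / Real.sqrt p) / (u / Real.sqrt p)| ^ p) u
    = Real.sqrt p * ∫ t in Ioc (0:ℝ) 2, |Real.sin t / t| ^ p := by
  have hsp : (0:ℝ) < Real.sqrt p := Real.sqrt_pos.mpr hp
  rw [setIntegral_indicator measurableSet_Ioc,
    inter_eq_self_of_subset_right Ioc_subset_Ioi_self,
    ← intervalIntegral.integral_of_le (by positivity : (0:ℝ) ≤ 2 * Real.sqrt p)]
  have := intervalIntegral.integral_comp_div (a := 0) (b := 2 * Real.sqrt p)
    (c := Real.sqrt p) (f := fun t => |Real.sin t / t| ^ p) hsp.ne'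
  rw [this]
  rw [zero_div, mul_div_assoc, div_self hsp.ne', mul_one,
    intervalIntegral.integral_of_le (by norm_num : (0:ℝ) ≤ 2), smul_eq_mul]

lemma main_lim :
    Tendsto (fun p : ℝ => ∫ u in Ioi (0:ℝ), (Ioc (0:ℝ) (2 * Real.sqrt p)).indicator
      (fun u => |Real.sin (u / Real.sqrt p) / (u / Real.sqrt p)| ^ p) u)
      atTop (nhds (Real.sqrt (π / (1/6)) / 2)) := by
  have gauss := integral_gaussian_Ioi (1/6)
  rw [← gauss]
  apply tendsto_integral_filter_of_dominated_convergence
    (bound := fun u => Real.exp (-(1/8) * u^2))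
  · -- measurability
    filter_upwards [eventually_ge_atTop (1:ℝ)] with p hp
    have hp0 : (0:ℝ) < p := lt_of_lt_of_le one_pos hp
    have hsp : (0:ℝ) < Real.sqrt p := Real.sqrt_pos.mpr hp0
    have hcont : ContinuousOn (fun u : ℝ => |Real.sin (u / Real.sqrt p) / (u / Real.sqrt p)| ^ p)
        (Ioi (0:ℝ)) := by
      intro u hu
      apply ContinuousAt.continuousWithinAt
      have hne : u / Real.sqrt p ≠ 0 := by
        have : (0:ℝ) < u / Real.sqrt p := div_pos hu hsp
        exact this.ne'
      have h1 : ContinuousAt (fun u : ℝ => |Real.sin (u / Real.sqrt p) / (u / Real.sqrt p)|) u := by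
        apply ContinuousAt.abs
        apply ContinuousAt.div
        · exact (Real.continuous_sin.continuousAt).comp ((continuous_id.div_const _).continuousAt)
        · exact (continuous_id.div_const _).continuousAt
        · exact hne
      exact (Real.continuousAt_rpow_const _ p (Or.inr hp0.le)).comp h1
    exact ((hcont.aestronglyMeasurable measurableSet_Ioi).indicator measurableSet_Ioc)
  · -- bound
    filter_upwards [eventually_ge_atTop (1:ℝ)] with p hp
    filter_upwards [ae_restrict_mem measurableSet_Ioi] with u hu
    have hp0 : (0:ℝ) < p := lt_of_lt_of_le one_pos hp
    have hsp : (0:ℝ) < Real.sqrt p := Real.sqrt_pos.mpr hp0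
    by_cases hmem : u ∈ Ioc (0:ℝ) (2 * Real.sqrt p)
    · rw [indicator_of_mem hmem]
      set t := u / Real.sqrt p with ht
      have ht0 : 0 < t := div_pos hmem.1 hsp
      have ht2 : t ≤ 2 := by
        rw [ht, div_le_iff₀ hsp]
        linarith [hmem.2]
      have hsin : 0 < Real.sin t :=
        Real.sin_pos_of_pos_of_lt_pi ht0 (by linarith [Real.pi_gt_three])
      have hbase : |Real.sin t / t| = Real.sin t / t := abs_of_pos (div_pos hsin ht0)
      have h1 : Real.sin t / t ≤ 1 - t^2/8 := by
        rw [div_le_iff₀ ht0]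
        nlinarith [sin_le_poly t ht0.le,
          mul_nonneg (pow_nonneg ht0.le 3) (by nlinarith : (0:ℝ) ≤ 5 - t^2)]
      have h2 : (1:ℝ) - t^2/8 ≤ Real.exp (-(t^2/8)) := by
        have := Real.add_one_le_exp (-(t^2/8))
        linarith
      have h3 : |Real.sin t / t| ^ p ≤ Real.exp (-(t^2/8)) ^ p := by
        apply Real.rpow_le_rpow (abs_nonneg _) _ hp0.le
        rw [hbase]; linarith
      rw [norm_eq_abs, abs_of_nonneg (Real.rpow_nonneg (abs_nonneg _) _)]
      refine h3.trans (le_of_eq ?_)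
      rw [← Real.exp_mul]
      congr 1
      have htsq : t^2 = u^2 / p := by
        rw [ht, div_pow, Real.sq_sqrt hp0.le]
      rw [htsq]
      field_simp
    · rw [indicator_of_notMem hmem]
      simp [Real.exp_nonneg]
  · -- integrable bound
    have : Integrable (fun u : ℝ => Real.exp (-(1/8) * u^2)) := by
      have := integrable_exp_neg_mul_sq (b := 1/8) (by norm_num)
      simpa using this
    exact this.integrableOn
  · -- pointwise limit
    filter_upwards [ae_restrict_mem measurableSet_Ioi] with u hu
    have hu0 : (0:ℝ) < u := hu
    have ha : (0:ℝ) < u^2/6 := by positivity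
    have hlow := log_lim (-(u^2/6)) 0 (by linarith)
    have hupp := log_lim (-(u^2/6)) (u^4/120) (by linarith)
    have hexp : Tendsto (fun p : ℝ => p * Real.log (Real.sin (u / Real.sqrt p) /
        (u / Real.sqrt p))) atTop (nhds (-(u^2/6))) := by
      apply tendsto_of_tendsto_of_tendsto_of_le_of_le' hlow hupp
      · filter_upwards [eventually_ge_atTop (max (u^2) 1)] with p hp
        have hp1 : (1:ℝ) ≤ p := le_trans (le_max_right _ _) hp
        have hpu : u^2 ≤ p := le_trans (le_max_left _ _) hp
        have hp0 : (0:ℝ) < p := by linarith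
        have hsp : (0:ℝ) < Real.sqrt p := Real.sqrt_pos.mpr hp0
        set t := u / Real.sqrt p with ht
        have ht0 : 0 < t := div_pos hu0 hsp
        have ht1 : t ≤ 1 := by
          rw [ht, div_le_one hsp]
          calc u = Real.sqrt (u^2) := by rw [Real.sqrt_sq hu0.le]
          _ ≤ Real.sqrt p := Real.sqrt_le_sqrt hpu
        have htsq : t^2 = u^2/p := by rw [ht, div_pow, Real.sq_sqrt hp0.le]
        have hsin : 0 < Real.sin t := Real.sin_pos_of_pos_of_lt_pi ht0
          (by linarith [Real.pi_gt_three])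
        have harg : 1 + (-(u^2/6)/p + 0/p^2) = 1 - t^2/6 := by
          rw [htsq]; field_simp; ring
        rw [harg]
        have hposarg : (0:ℝ) < 1 - t^2/6 := by nlinarith
        have hlog : Real.log (1 - t^2/6) ≤ Real.log (Real.sin t / t) := by
          apply Real.log_le_log hposarg
          rw [le_div_iff₀ ht0]
          nlinarith [sin_ge_poly t ht0.le]
        exact mul_le_mul_of_nonneg_left hlog hp0.le
      · filter_upwards [eventually_ge_atTop (max (u^2) 1)] with p hp
        have hp1 : (1:ℝ) ≤ p := le_trans (le_max_right _ _) hp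
        have hpu : u^2 ≤ p := le_trans (le_max_left _ _) hp
        have hp0 : (0:ℝ) < p := by linarith
        have hsp : (0:ℝ) < Real.sqrt p := Real.sqrt_pos.mpr hp0
        set t := u / Real.sqrt p with ht
        have ht0 : 0 < t := div_pos hu0 hsp
        have htsq : t^2 = u^2/p := by rw [ht, div_pow, Real.sq_sqrt hp0.le]
        have hsin : 0 < Real.sin t := by
          apply Real.sin_pos_of_pos_of_lt_pi ht0
          have ht1 : t ≤ 1 := by
            rw [ht, div_le_one hsp]
            calc u = Real.sqrt (u^2) := by rw [Real.sqrt_sq hu0.le]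
            _ ≤ Real.sqrt p := Real.sqrt_le_sqrt hpu
          linarith [Real.pi_gt_three]
        have harg : 1 + (-(u^2/6)/p + (u^4/120)/p^2) = 1 - t^2/6 + t^4/120 := by
          rw [show t^4 = (t^2)^2 by ring, htsq]; field_simp; ring
        rw [harg]
        have hlog : Real.log (Real.sin t / t) ≤ Real.log (1 - t^2/6 + t^4/120) := by
          apply Real.log_le_log (div_pos hsin ht0)
          rw [div_le_iff₀ ht0]
          nlinarith [sin_le_poly t ht0.le]
        exact mul_le_mul_of_nonneg_left hlog hp0.le
    have hfinal : Tendsto (fun p : ℝ => (Ioc (0:ℝ) (2 * Real.sqrt p)).indicator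
        (fun u => |Real.sin (u / Real.sqrt p) / (u / Real.sqrt p)| ^ p) u) atTop
        (nhds (Real.exp (-(1/6) * u^2))) := by
      have : Tendsto (fun p : ℝ => Real.exp (p * Real.log (Real.sin (u / Real.sqrt p) /
          (u / Real.sqrt p)))) atTop (nhds (Real.exp (-(u^2/6)))) :=
        (Real.continuous_exp.continuousAt.tendsto).comp hexp
      rw [show Real.exp (-(1/6) * u^2) = Real.exp (-(u^2/6)) by ring_nf]
      apply this.congr'
      filter_upwards [eventually_ge_atTop (max (u^2) 1)] with p hp
      have hp1 : (1:ℝ) ≤ p := le_trans (le_max_right _ _) hp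
      have hpu : u^2 ≤ p := le_trans (le_max_left _ _) hp
      have hp0 : (0:ℝ) < p := by linarith
      have hsp : (0:ℝ) < Real.sqrt p := Real.sqrt_pos.mpr hp0
      set t := u / Real.sqrt p with ht
      have ht0 : 0 < t := div_pos hu0 hsp
      have ht1 : t ≤ 1 := by
        rw [ht, div_le_one hsp]
        calc u = Real.sqrt (u^2) := by rw [Real.sqrt_sq hu0.le]
        _ ≤ Real.sqrt p := Real.sqrt_le_sqrt hpu
      have hsin : 0 < Real.sin t := Real.sin_pos_of_pos_of_lt_pi ht0
        (by linarith [Real.pi_gt_three])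
      have hmem : u ∈ Ioc (0:ℝ) (2 * Real.sqrt p) := by
        constructor
        · exact hu0
        · have : u ≤ Real.sqrt p := by
            calc u = Real.sqrt (u^2) := by rw [Real.sqrt_sq hu0.le]
            _ ≤ Real.sqrt p := Real.sqrt_le_sqrt hpu
          linarith
      have habs : |Real.sin (u / Real.sqrt p) / (u / Real.sqrt p)| = Real.sin t / t :=
        abs_of_pos (div_pos hsin ht0)
      rw [indicator_of_mem hmem, habs, Real.rpow_def_of_pos (div_pos hsin ht0)]
      exact congrArg _ (mul_comm _ _)
    exact hfinal

lemma contOn {p : ℝ} (hp : 0 < p) :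
    ContinuousOn (fun t : ℝ => |Real.sin t / t| ^ p) (Ioi (0:ℝ)) := by
  intro t ht
  apply ContinuousAt.continuousWithinAt
  have hne : t ≠ 0 := ne_of_gt ht
  have h1 : ContinuousAt (fun t : ℝ => |Real.sin t / t|) t :=
    (Real.continuous_sin.continuousAt.div continuousAt_id hne).abs
  exact (Real.continuousAt_rpow_const _ p (Or.inr hp.le)).comp h1



lemma intOn_Ioc {p : ℝ} (hp : 0 < p) :
    IntegrableOn (fun t : ℝ => |Real.sin t / t| ^ p) (Ioc (0:ℝ) 2) := by
  have hg : IntegrableOn (fun _ : ℝ => (1:ℝ)) (Ioc (0:ℝ) 2) :=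
    integrableOn_const measure_Ioc_lt_top.ne
  apply hg.integrable.mono
  · exact ((contOn hp).mono Ioc_subset_Ioi_self).aestronglyMeasurable measurableSet_Ioc
  · filter_upwards [ae_restrict_mem measurableSet_Ioc] with t ht
    rw [norm_eq_abs, abs_of_nonneg (Real.rpow_nonneg (abs_nonneg _) _),
      norm_one]
    apply Real.rpow_le_one (abs_nonneg _) _ hp.le
    rw [abs_div, abs_of_pos ht.1, div_le_one ht.1]
    calc |Real.sin t| ≤ |t| := Real.abs_sin_le_abs
    _ = t := abs_of_pos ht.1

lemma intOn_Ioi {p : ℝ} (hp : 1 < p) :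
    IntegrableOn (fun t : ℝ => |Real.sin t / t| ^ p) (Ioi (2:ℝ)) := by
  have hg : IntegrableOn (fun t : ℝ => t ^ (-p)) (Ioi (2:ℝ)) :=
    integrableOn_Ioi_rpow_of_lt (by linarith) two_pos
  apply hg.integrable.mono
  · exact ((contOn (by linarith)).mono (Ioi_subset_Ioi (by norm_num))).aestronglyMeasurable
      measurableSet_Ioi
  · filter_upwards [ae_restrict_mem measurableSet_Ioi] with t ht
    have ht0 : (0:ℝ) < t := lt_trans two_pos ht
    rw [norm_eq_abs, abs_of_nonneg (Real.rpow_nonneg (abs_nonneg _) _),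
      norm_eq_abs, abs_of_nonneg (Real.rpow_nonneg ht0.le _)]
    have hbase : |Real.sin t / t| ≤ t⁻¹ := by
      rw [abs_div, abs_of_pos ht0, div_le_iff₀ ht0, inv_mul_cancel₀ ht0.ne']
      exact abs_sin_le_one t
    calc |Real.sin t / t| ^ p ≤ (t⁻¹) ^ p := Real.rpow_le_rpow (abs_nonneg _) hbase (by linarith)
    _ = t ^ (-p) := by rw [Real.rpow_neg ht0.le, Real.inv_rpow ht0.le]

lemma tail_bound {p : ℝ} (hp : 2 ≤ p) :
    ∫ t in Ioi (2:ℝ), |Real.sin t / t| ^ p ≤ 2 * Real.exp (-(Real.log 2 * p)) := by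
  have hp1 : (1:ℝ) < p := by linarith
  have hg : IntegrableOn (fun t : ℝ => t ^ (-p)) (Ioi (2:ℝ)) :=
    integrableOn_Ioi_rpow_of_lt (by linarith) two_pos
  have h1 : ∫ t in Ioi (2:ℝ), |Real.sin t / t| ^ p ≤ ∫ t in Ioi (2:ℝ), t ^ (-p) := by
    apply setIntegral_mono_on (intOn_Ioi hp1) hg measurableSet_Ioi
    intro t ht
    have ht0 : (0:ℝ) < t := lt_trans two_pos ht
    have hbase : |Real.sin t / t| ≤ t⁻¹ := by
      rw [abs_div, abs_of_pos ht0, div_le_iff₀ ht0, inv_mul_cancel₀ ht0.ne']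
      exact abs_sin_le_one t
    calc |Real.sin t / t| ^ p ≤ (t⁻¹) ^ p := Real.rpow_le_rpow (abs_nonneg _) hbase (by linarith)
    _ = t ^ (-p) := by rw [Real.rpow_neg ht0.le, Real.inv_rpow ht0.le]
  rw [integral_Ioi_rpow_of_lt (by linarith) two_pos] at h1
  refine h1.trans ?_
  have h2 : (2:ℝ) ^ (-p+1) = 2 * Real.exp (-(Real.log 2 * p)) := by
    rw [Real.rpow_def_of_pos two_pos]
    rw [show Real.log 2 * (-p+1) = -(Real.log 2 * p) + Real.log 2 by ring, Real.exp_add,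
      Real.exp_log two_pos]
    ring
  have h3 : -(2:ℝ) ^ (-p+1) / (-p+1) = (2:ℝ)^(-p+1) / (p-1) := by
    rw [div_eq_div_iff (by linarith) (by linarith)]
    ring
  rw [h3, h2]
  apply div_le_self (by positivity) (by linarith)

lemma tail_lim :
    Tendsto (fun p : ℝ => Real.sqrt (p/2) * (2/π) *
      ∫ t in Ioi (2:ℝ), |Real.sin t / t| ^ p) atTop (nhds 0) := by
  have hU : Tendsto (fun p : ℝ => p * (2 * Real.exp (-(Real.log 2 * p)))) atTop (nhds 0) := by
    have hcomp : Tendsto (fun p : ℝ => Real.log 2 * p) atTop atTop :=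
      Tendsto.const_mul_atTop (Real.log_pos one_lt_two) tendsto_id
    have h0 := (tendsto_pow_mul_exp_neg_atTop_nhds_zero 1).comp hcomp
    have h1 := h0.const_mul (2 / Real.log 2)
    rw [mul_zero] at h1
    apply h1.congr
    intro p
    have hl2 : Real.log 2 ≠ 0 := (Real.log_pos one_lt_two).ne'
    simp only [Function.comp]
    field_simp
  apply tendsto_of_tendsto_of_tendsto_of_le_of_le' tendsto_const_nhds hU
  · filter_upwards [eventually_ge_atTop (2:ℝ)] with p hp
    have hT0 : 0 ≤ ∫ t in Ioi (2:ℝ), |Real.sin t / t| ^ p :=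
      setIntegral_nonneg measurableSet_Ioi (fun t ht => Real.rpow_nonneg (abs_nonneg _) _)
    positivity
  · filter_upwards [eventually_ge_atTop (2:ℝ)] with p hp
    have hp0 : (0:ℝ) < p := by linarith
    have hT0 : 0 ≤ ∫ t in Ioi (2:ℝ), |Real.sin t / t| ^ p :=
      setIntegral_nonneg measurableSet_Ioi (fun t ht => Real.rpow_nonneg (abs_nonneg _) _)
    have hsq : Real.sqrt (p/2) ≤ p := by
      calc Real.sqrt (p/2) ≤ Real.sqrt (p^2) := Real.sqrt_le_sqrt (by nlinarith)
      _ = p := Real.sqrt_sq hp0.le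
    have hpi : (2:ℝ)/π ≤ 1 := by
      rw [div_le_one Real.pi_pos]
      linarith [Real.pi_gt_three]
    calc Real.sqrt (p/2) * (2/π) * ∫ t in Ioi (2:ℝ), |Real.sin t / t| ^ p
        ≤ (p * 1) * (2 * Real.exp (-(Real.log 2 * p))) := by
          apply mul_le_mul _ (tail_bound hp) hT0 (by positivity)
          exact mul_le_mul hsq hpi (by positivity) hp0.le
    _ = p * (2 * Real.exp (-(Real.log 2 * p))) := by ring

theorem ball_function_tendsto_atTop :
    Tendsto (fun p : ℝ =>
        Real.sqrt (p / 2) * (2 / π) * ∫ t in Set.Ioi (0 : ℝ), |Real.sin t / t| ^ p)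
      atTop (nhds (Real.sqrt (3 / π))) := by
  have hconst : ((2/π)/Real.sqrt 2) * (Real.sqrt (π/(1/6))/2) = Real.sqrt (3/π) := by
    have h1 : Real.sqrt 2 ^ 2 = 2 := Real.sq_sqrt (by norm_num)
    have h2 : Real.sqrt (π/(1/6)) ^ 2 = π/(1/6) := Real.sq_sqrt (by positivity)
    have hE2 : (((2/π)/Real.sqrt 2) * (Real.sqrt (π/(1/6))/2))^2 = 3/π := by
      rw [mul_pow, div_pow, div_pow, div_pow, h1, h2]
      field_simp
      ring
    have hE0 : 0 ≤ ((2/π)/Real.sqrt 2) * (Real.sqrt (π/(1/6))/2) := by positivity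
    calc ((2/π)/Real.sqrt 2) * (Real.sqrt (π/(1/6))/2)
        = Real.sqrt ((((2/π)/Real.sqrt 2) * (Real.sqrt (π/(1/6))/2))^2) :=
          (Real.sqrt_sq hE0).symm
    _ = Real.sqrt (3/π) := by rw [hE2]
  have h := (main_lim.const_mul ((2/π)/Real.sqrt 2)).add tail_lim
  rw [add_zero, hconst] at h
  apply h.congr'
  filter_upwards [eventually_ge_atTop (2:ℝ)] with p hp
  have hp0 : (0:ℝ) < p := by linarith
  have hsplit : ∫ t in Ioi (0:ℝ), |Real.sin t / t| ^ p
      = (∫ t in Ioc (0:ℝ) 2, |Real.sin t / t| ^ p)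
        + ∫ t in Ioi (2:ℝ), |Real.sin t / t| ^ p := by
    rw [← setIntegral_union (Ioc_disjoint_Ioi le_rfl) measurableSet_Ioi
      (intOn_Ioc hp0) (intOn_Ioi (by linarith)),
      Ioc_union_Ioi_eq_Ioi (by norm_num : (0:ℝ) ≤ 2)]
  rw [hsplit, subst_lemma p hp0]
  have hsqd : Real.sqrt (p/2) = Real.sqrt p / Real.sqrt 2 := Real.sqrt_div hp0.le 2
  rw [hsqd]
  have h2 : Real.sqrt 2 ≠ 0 := by positivity
  have hπ : π ≠ 0 := Real.pi_ne_zero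
  field_simp
end

section
/- Let a₁ ≥ a₂ ≥ a₃ ≥ 0 with a₁² + a₂² + a₃² = 1 and a₁ ≥ a₂ + a₃. Then (1/a₁)(√(1-a₂²) + √(1-a₃²)) ≤ √2 + 1. -/
lemma key_perim (a x : ℝ) (hx0 : 0 ≤ x) (hxa : x ≤ a) :
    Real.sqrt (a ^ 2 + (a - x) ^ 2) + Real.sqrt (a ^ 2 + x ^ 2)
      ≤ (Real.sqrt 2 + 1) * a := by
  have ha : 0 ≤ a := le_trans hx0 hxa
  set A := Real.sqrt (a ^ 2 + (a - x) ^ 2) with hAdef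
  set B := Real.sqrt (a ^ 2 + x ^ 2) with hBdef
  have hA0 : 0 ≤ A := Real.sqrt_nonneg _
  have hB0 : 0 ≤ B := Real.sqrt_nonneg _
  have hA : A ^ 2 = a ^ 2 + (a - x) ^ 2 := Real.sq_sqrt (by positivity)
  have hB : B ^ 2 = a ^ 2 + x ^ 2 := Real.sq_sqrt (by positivity)
  have hs2 : Real.sqrt 2 ^ 2 = 2 := Real.sq_sqrt (by norm_num)
  have hs2n : (0:ℝ) ≤ Real.sqrt 2 := Real.sqrt_nonneg _
  have hu : 0 ≤ x * (a - x) := mul_nonneg hx0 (by linarith)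
  have hAB : A * B ≤ Real.sqrt 2 * a ^ 2 + x * (a - x) := by
    rw [hAdef, hBdef, ← Real.sqrt_mul (by positivity)]
    have h1 : (a ^ 2 + (a - x) ^ 2) * (a ^ 2 + x ^ 2)
        ≤ (Real.sqrt 2 * a ^ 2 + x * (a - x)) ^ 2 := by
      nlinarith [sq_nonneg a, sq_nonneg (x*(a-x)), mul_nonneg (mul_nonneg hs2n (sq_nonneg a)) hu]
    calc Real.sqrt ((a ^ 2 + (a - x) ^ 2) * (a ^ 2 + x ^ 2))
        ≤ Real.sqrt ((Real.sqrt 2 * a ^ 2 + x * (a - x)) ^ 2) := Real.sqrt_le_sqrt h1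
      _ = Real.sqrt 2 * a ^ 2 + x * (a - x) := Real.sqrt_sq (by positivity)
  have hsq : (A + B) ^ 2 ≤ ((Real.sqrt 2 + 1) * a) ^ 2 := by
    have : (A + B) ^ 2 = A ^ 2 + B ^ 2 + 2 * (A * B) := by ring
    rw [this, hA, hB]
    nlinarith [hAB, hs2]
  calc A + B = Real.sqrt ((A + B) ^ 2) := (Real.sqrt_sq (by positivity)).symm
    _ ≤ Real.sqrt (((Real.sqrt 2 + 1) * a) ^ 2) := Real.sqrt_le_sqrt hsq
    _ = (Real.sqrt 2 + 1) * a := Real.sqrt_sq (by positivity)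

theorem rectangular_section_perimeter_bound (a₁ a₂ a₃ : ℝ)
    (h12 : a₂ ≤ a₁) (h23 : a₃ ≤ a₂) (h3 : 0 ≤ a₃)
    (hnorm : a₁ ^ 2 + a₂ ^ 2 + a₃ ^ 2 = 1) (hsum : a₂ + a₃ ≤ a₁) :
    (1 / a₁) * (Real.sqrt (1 - a₂ ^ 2) + Real.sqrt (1 - a₃ ^ 2)) ≤ Real.sqrt 2 + 1 := by
  have ha1 : 0 < a₁ := by nlinarith [sq_nonneg a₁, sq_nonneg a₂, sq_nonneg a₃, sq_nonneg (a₁ - a₂), sq_nonneg (a₂ - a₃)]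
  have h2 : 1 - a₂ ^ 2 = a₁ ^ 2 + a₃ ^ 2 := by linarith
  have h3' : 1 - a₃ ^ 2 = a₁ ^ 2 + a₂ ^ 2 := by linarith
  rw [h2, h3', one_div, inv_mul_le_iff₀ ha1]
  have hstep : Real.sqrt (a₁ ^ 2 + a₃ ^ 2) ≤ Real.sqrt (a₁ ^ 2 + (a₁ - a₂) ^ 2) := by
    apply Real.sqrt_le_sqrt
    nlinarith
  have hkey := key_perim a₁ a₂ (le_trans h3 h23) h12
  nlinarith [hkey, hstep]
end

section
/- Let n ≥ 3 and a = (a₁,…,aₙ) ∈ ℝⁿ with a₁ ≥ ⋯ ≥ aₙ ≥ 0, ∑ aₖ² = 1, and a₁ ≤ √(√2 - 1). Then (n-1)·√(1 - (1-a₁²)/(n-1))·√2 ≤ (n-2)√2 + 1. -/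
theorem constrained_bound_small_a1 (n : ℕ) (hn : 3 ≤ n) (i0 : Fin n) (hi0 : (i0 : ℕ) = 0) (a : Fin n → ℝ)
    (hmono : ∀ i j : Fin n, i ≤ j → a j ≤ a i) (hnonneg : ∀ k, 0 ≤ a k)
    (hnorm : ∑ k, (a k) ^ 2 = 1) (ha1 : a i0 ≤ Real.sqrt (Real.sqrt 2 - 1)) :
    (n - 1) * Real.sqrt (1 - (1 - (a i0) ^ 2) / (n - 1)) * Real.sqrt 2 ≤
      (n - 2) * Real.sqrt 2 + 1 := by
  set s : ℝ := Real.sqrt 2 with hs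
  have hs2 : s ^ 2 = 2 := Real.sq_sqrt (by norm_num)
  have hs1 : 1 ≤ s := by nlinarith [Real.sqrt_nonneg 2]
  have hs32 : s ≤ 3/2 := by nlinarith [Real.sqrt_nonneg 2]
  set m : ℝ := (n : ℝ) - 1 with hm
  have hm2 : 2 ≤ m := by
    have : (3 : ℝ) ≤ (n : ℝ) := by exact_mod_cast hn
    linarith
  have hn2 : ((n : ℝ) - 2) = m - 1 := by rw [hm]; ring
  rw [hn2]
  clear_value m
  have hmpos : 0 < m := by linarith
  set t : ℝ := a i0 ^ 2 with htdef
  have ht0 : 0 ≤ t := sq_nonneg _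
  clear_value t
  have hts : t ≤ s - 1 := by
    have h1 : a i0 ^ 2 ≤ Real.sqrt (s - 1) ^ 2 :=
      pow_le_pow_left₀ (hnonneg i0) ha1 2
    have h2 : Real.sqrt (s - 1) ^ 2 = s - 1 := Real.sq_sqrt (by linarith)
    linarith [h1, h2]
  have hx0 : 0 ≤ 1 - (2 - s) / m := by
    rw [sub_nonneg, div_le_one hmpos]; linarith
  -- step 1: monotonicity of sqrt
  have step1 : Real.sqrt (1 - (1 - t) / m) ≤ Real.sqrt (1 - (2 - s) / m) := by
    apply Real.sqrt_le_sqrt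
    have : (2 - s) / m ≤ (1 - t) / m :=
      (div_le_div_iff_of_pos_right hmpos).mpr (by linarith)
    linarith
  -- step 2
  have step2 : m * Real.sqrt (1 - (2 - s) / m) * s ≤ (m - 1) * s + 1 := by
    have hms : 0 ≤ m * s := by positivity
    have key : (m * s) ^ 2 * (1 - (2 - s) / m) ≤ ((m - 1) * s + 1) ^ 2 := by
      have hexp : (m * s) ^ 2 * (1 - (2 - s) / m) = 2 * m ^ 2 - 2 * m * (2 - s) := by
        field_simp
        linear_combination (m + s - 2) * hs2
      rw [hexp]
      nlinarith [hs2, hs32, hm2, hs1]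
    have := Real.sqrt_le_sqrt key
    rw [Real.sqrt_mul (sq_nonneg _), Real.sqrt_sq hms,
      Real.sqrt_sq (by nlinarith : (0:ℝ) ≤ (m - 1) * s + 1)] at this
    linarith [this, mul_comm m s]
    
  calc m * Real.sqrt (1 - (1 - t) / m) * s
      ≤ m * Real.sqrt (1 - (2 - s) / m) * s := by
        apply mul_le_mul_of_nonneg_right (mul_le_mul_of_nonneg_left step1 (le_of_lt hmpos))
        linarith
    _ ≤ (m - 1) * s + 1 := step2
end

section
/- Let n ≥ 3 and a₁ ∈ (1/√2, 1]. Then (n-1)·√(1 - (1-a₁²)/(n-1))·(1/a₁) ≤ (n-2)√2 + 1 holds whenever a₁ ≥ 1/√(√2 + 1/2); moreover among n ≥ 3 the constraint on a₁ is strongest for n = 3. -/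
private lemma key_ineq (m a : ℝ) (hm : 2 ≤ m) (ha : 0 < a) (ha1 : a ≤ 1)
    (h : 2 ≤ a ^ 2 * (2 * Real.sqrt 2 + 1)) :
    m * Real.sqrt (1 - (1 - a ^ 2) / m) * (1 / a) ≤ (m - 1) * Real.sqrt 2 + 1 := by
  set s := Real.sqrt 2 with hsdef
  have hs : s ^ 2 = 2 := Real.sq_sqrt (by norm_num)
  have hs0 : 0 ≤ s := Real.sqrt_nonneg 2
  have hs1 : 1 ≤ s := by nlinarith
  have hs2 : s ≤ 3 / 2 := by nlinarith
  have hm0 : 0 < m := by linarith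
  have ha2 : 1 / 2 ≤ a ^ 2 := by nlinarith
  have hcond : m ≤ a ^ 2 * (2 * m + 2 * s - 3) := by nlinarith
  have hexpr : 1 - (1 - a ^ 2) / m = (m - 1 + a ^ 2) / m := by
    field_simp
    ring
  rw [hexpr, mul_one_div, div_le_iff₀ ha]
  have hx : 0 ≤ (m - 1 + a ^ 2) / m := div_nonneg (by nlinarith) hm0.le
  have h1 : m * Real.sqrt ((m - 1 + a ^ 2) / m) = Real.sqrt (m ^ 2 * ((m - 1 + a ^ 2) / m)) := by
    rw [Real.sqrt_mul (sq_nonneg m), Real.sqrt_sq hm0.le]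
  rw [h1]
  have hR : 0 ≤ ((m - 1) * s + 1) * a :=
    mul_nonneg (by nlinarith [mul_nonneg (show (0:ℝ) ≤ m - 1 by linarith) hs0]) ha.le
  have h2 : m ^ 2 * ((m - 1 + a ^ 2) / m) ≤ (((m - 1) * s + 1) * a) ^ 2 := by
    have : m ^ 2 * ((m - 1 + a ^ 2) / m) = m * (m - 1 + a ^ 2) := by
      field_simp
    rw [this]
    have hmul := mul_le_mul_of_nonneg_right hcond (show (0:ℝ) ≤ m - 1 by linarith)
    have expand : (((m - 1) * s + 1) * a) ^ 2 = (2 * (m - 1) ^ 2 + 2 * s * (m - 1) + 1) * a ^ 2 := by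
      calc (((m - 1) * s + 1) * a) ^ 2 = ((m - 1) ^ 2 * s ^ 2 + 2 * (m - 1) * s + 1) * a ^ 2 := by
            ring
        _ = (2 * (m - 1) ^ 2 + 2 * s * (m - 1) + 1) * a ^ 2 := by rw [hs]; ring
    rw [expand]
    nlinarith [hmul]
  calc Real.sqrt (m ^ 2 * ((m - 1 + a ^ 2) / m)) ≤ Real.sqrt ((((m - 1) * s + 1) * a) ^ 2) :=
        Real.sqrt_le_sqrt h2
    _ = ((m - 1) * s + 1) * a := Real.sqrt_sq hR

theorem constrained_bound_large_a1 :
    (∀ n : ℕ, 3 ≤ n → ∀ a₁ : ℝ, 1 / Real.sqrt 2 < a₁ → a₁ ≤ 1 →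
      1 / Real.sqrt (Real.sqrt 2 + 1 / 2) ≤ a₁ →
      (n - 1) * Real.sqrt (1 - (1 - a₁ ^ 2) / (n - 1)) * (1 / a₁) ≤
        (n - 2) * Real.sqrt 2 + 1) ∧
    (∀ n : ℕ, 3 ≤ n → ∀ a₁ : ℝ, 1 / Real.sqrt 2 < a₁ → a₁ ≤ 1 →
      ((3 : ℝ) - 1) * Real.sqrt (1 - (1 - a₁ ^ 2) / ((3 : ℝ) - 1)) * (1 / a₁) ≤
          ((3 : ℝ) - 2) * Real.sqrt 2 + 1 →
      (n - 1) * Real.sqrt (1 - (1 - a₁ ^ 2) / (n - 1)) * (1 / a₁) ≤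
        (n - 2) * Real.sqrt 2 + 1) := by
  have hs : Real.sqrt 2 ^ 2 = 2 := Real.sq_sqrt (by norm_num)
  have hs0 : 0 ≤ Real.sqrt 2 := Real.sqrt_nonneg 2
  have hs1 : 1 ≤ Real.sqrt 2 := by nlinarith
  constructor
  · intro n hn a₁ halo ha1 hage
    have ha : 0 < a₁ := lt_trans (by positivity) halo
    have hm : (2:ℝ) ≤ (n:ℝ) - 1 := by
      have : (3:ℝ) ≤ (n:ℝ) := by exact_mod_cast hn
      linarith
    have hmn : ((n:ℝ) - 2) = ((n:ℝ) - 1) - 1 := by ring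
    rw [hmn]
    apply key_ineq _ _ hm ha ha1
    -- from a₁ ≥ 1/√(√2+1/2) derive 2 ≤ a₁²(2√2+1)
    have hc0 : (0:ℝ) < Real.sqrt 2 + 1 / 2 := by positivity
    have ht2 : Real.sqrt (Real.sqrt 2 + 1 / 2) ^ 2 = Real.sqrt 2 + 1 / 2 := Real.sq_sqrt hc0.le
    have ht0 : 0 < Real.sqrt (Real.sqrt 2 + 1 / 2) := Real.sqrt_pos.mpr hc0
    have h1 : 1 ≤ a₁ * Real.sqrt (Real.sqrt 2 + 1 / 2) := by
      rw [div_le_iff₀ ht0] at hage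
      linarith
    have h2 : 1 ≤ a₁ ^ 2 * (Real.sqrt 2 + 1 / 2) := by
      have heq : a₁ ^ 2 * (Real.sqrt 2 + 1 / 2) = (a₁ * Real.sqrt (Real.sqrt 2 + 1 / 2)) ^ 2 := by
        rw [mul_pow, ht2]
      rw [heq]
      nlinarith [h1]
    nlinarith [h2]
  · intro n hn a₁ halo ha1 h3
    have ha : 0 < a₁ := lt_trans (by positivity) halo
    have hm : (2:ℝ) ≤ (n:ℝ) - 1 := by
      have : (3:ℝ) ≤ (n:ℝ) := by exact_mod_cast hn
      linarith
    have hmn : ((n:ℝ) - 2) = ((n:ℝ) - 1) - 1 := by ring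
    rw [hmn]
    apply key_ineq _ _ hm ha ha1
    -- extract 2 ≤ a₁²(2√2+1) from the n = 3 inequality h3
    have hexpr : 1 - (1 - a₁ ^ 2) / ((3:ℝ) - 1) = (1 + a₁ ^ 2) / 2 := by ring
    rw [hexpr] at h3
    have hx : 0 ≤ (1 + a₁ ^ 2) / 2 := by positivity
    have h4 : 2 * Real.sqrt ((1 + a₁ ^ 2) / 2) ≤ (Real.sqrt 2 + 1) * a₁ := by
      have := h3
      rw [mul_one_div, div_le_iff₀ ha] at this
      nlinarith [this]
    have h5 : Real.sqrt ((1 + a₁ ^ 2) / 2) ^ 2 = (1 + a₁ ^ 2) / 2 := Real.sq_sqrt hx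
    have h6 : 0 ≤ Real.sqrt ((1 + a₁ ^ 2) / 2) := Real.sqrt_nonneg _
    nlinarith [sq_nonneg (2 * Real.sqrt ((1 + a₁ ^ 2) / 2) - (Real.sqrt 2 + 1) * a₁),
      mul_le_mul_of_nonneg_left h4 (show (0:ℝ) ≤ 2 * Real.sqrt ((1 + a₁ ^ 2) / 2) by positivity)]
end

section
/- Define BP(n) = (1/(n·Γ(n/2))) · [((n-2)√2 + 1)·Γ((n-1)/2)]^{(n-1)/(n-2)} / π^{1/(2(n-2))} for integers n ≥ 3. Then BP(n) < 1 for all n ≥ 14. -/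
open Real

lemma s2u : Real.sqrt 2 ≤ 1.4142136 := by
  rw [show (1.4142136:ℝ) = Real.sqrt (1.4142136^2) from (Real.sqrt_sq (by norm_num)).symm]
  exact Real.sqrt_le_sqrt (by norm_num)

lemma s2l : (1:ℝ) ≤ Real.sqrt 2 := by
  rw [show (1:ℝ) = Real.sqrt 1 from Real.sqrt_one.symm]
  exact Real.sqrt_le_sqrt (by norm_num)

lemma spu : Real.sqrt π ≤ 1.772454 := by
  rw [show (1.772454:ℝ) = Real.sqrt (1.772454^2) from (Real.sqrt_sq (by norm_num)).symm]
  exact Real.sqrt_le_sqrt (by nlinarith [Real.pi_lt_d6])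

lemma spl : (1.772453:ℝ) ≤ Real.sqrt π := by
  rw [show (1.772453:ℝ) = Real.sqrt (1.772453^2) from (Real.sqrt_sq (by norm_num)).symm]
  exact Real.sqrt_le_sqrt (by nlinarith [Real.pi_gt_d6])

lemma wendel {x : ℝ} (hx : 0 < x) :
    Real.Gamma (x + 1/2) * Real.sqrt x ≤ Real.Gamma (x + 1) := by
  have hg1 : 0 < Real.Gamma x := Real.Gamma_pos_of_pos hx
  have hg2 : 0 < Real.Gamma (x+1) := Real.Gamma_pos_of_pos (by linarith)
  have hg3 : 0 < Real.Gamma (x+1/2) := Real.Gamma_pos_of_pos (by linarith)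
  have h := Real.Gamma_mul_add_mul_le_rpow_Gamma_mul_rpow_Gamma hx
    (show (0:ℝ) < x+1 by linarith) one_half_pos one_half_pos (by norm_num)
  have h' : Real.Gamma (x+1/2) ≤ Real.Gamma x ^ ((1:ℝ)/2) * Real.Gamma (x+1) ^ ((1:ℝ)/2) := by
    have e : (1/2:ℝ)*x + (1/2:ℝ)*(x+1) = x + 1/2 := by ring
    rwa [e] at h
  apply le_of_pow_le_pow_left₀ two_ne_zero hg2.le
  calc (Real.Gamma (x+1/2) * Real.sqrt x)^2 = Real.Gamma (x+1/2)^2 * x := by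
        rw [mul_pow, Real.sq_sqrt hx.le]
  _ ≤ (Real.Gamma x ^ ((1:ℝ)/2) * Real.Gamma (x+1) ^ ((1:ℝ)/2))^2 * x := by
        have := pow_le_pow_left₀ hg3.le h' 2
        nlinarith [this]
  _ = Real.Gamma x * Real.Gamma (x+1) * x := by
        rw [mul_pow, ← Real.rpow_natCast (Real.Gamma x ^ ((1:ℝ)/2)) 2,
          ← Real.rpow_natCast (Real.Gamma (x+1) ^ ((1:ℝ)/2)) 2,
          ← Real.rpow_mul hg1.le, ← Real.rpow_mul hg2.le]
        norm_num
  _ = Real.Gamma (x+1) ^ 2 := by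
        rw [Real.Gamma_add_one hx.ne']; ring

lemma factorial_le {k : ℕ} (hk : 1 ≤ k) :
    (k.factorial : ℝ) ≤ exp 1 * Real.sqrt k * ((k:ℝ) / exp 1)^k := by
  have hle : Stirling.stirlingSeq k ≤ Stirling.stirlingSeq 1 := by
    obtain ⟨j, rfl⟩ : ∃ j, k = j + 1 := ⟨k-1, by omega⟩
    have h := Stirling.log_stirlingSeq'_antitone (Nat.zero_le j)
    simp only [Function.comp] at h
    have h1 : Real.log (Stirling.stirlingSeq (j+1)) ≤ Real.log (Stirling.stirlingSeq 1) := h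
    exact (Real.log_le_log_iff (Stirling.stirlingSeq'_pos j) (Stirling.stirlingSeq'_pos 0)).mp h1
  rw [Stirling.stirlingSeq_one] at hle
  have hden : 0 < Real.sqrt (2*(k:ℝ)) * ((k:ℝ)/exp 1)^k := by
    have : (0:ℝ) < k := by exact_mod_cast hk
    positivity
  have hdef : (k.factorial : ℝ) = Stirling.stirlingSeq k * (Real.sqrt (2*(k:ℝ)) * ((k:ℝ)/exp 1)^k) := by
    rw [Stirling.stirlingSeq]
    field_simp
  rw [hdef]
  have h2 : Real.sqrt (2*(k:ℝ)) = Real.sqrt 2 * Real.sqrt k := Real.sqrt_mul (by norm_num) _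
  calc Stirling.stirlingSeq k * (Real.sqrt (2*(k:ℝ)) * ((k:ℝ)/exp 1)^k)
      ≤ (exp 1 / Real.sqrt 2) * (Real.sqrt (2*(k:ℝ)) * ((k:ℝ)/exp 1)^k) :=
        mul_le_mul_of_nonneg_right hle hden.le
  _ = exp 1 * Real.sqrt k * ((k:ℝ)/exp 1)^k := by
        rw [h2]
        have : Real.sqrt 2 ≠ 0 := by positivity
        field_simp

lemma explin {k : ℕ} (hk : 11 ≤ k) : (23:ℝ)/10 * k + 2 ≤ (exp 1 / 2)^k := by
  induction k, hk using Nat.le_induction with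
  | base =>
    have he : (2.7182818283:ℝ) < exp 1 := Real.exp_one_gt_d9
    calc (23:ℝ)/10*(11:ℕ)+2 ≤ ((2.7182818283:ℝ)/2)^11 := by norm_num
    _ ≤ (exp 1/2)^11 := by gcongr
  | succ k hk ih =>
    have he : (2.7182818283:ℝ) < exp 1 := Real.exp_one_gt_d9
    have hk' : (11:ℝ) ≤ k := by exact_mod_cast hk
    calc (23:ℝ)/10*(k+1:ℕ)+2 ≤ (1.359:ℝ)*((23:ℝ)/10*k+2) := by push_cast; nlinarith
    _ ≤ (exp 1/2)*((23:ℝ)/10*k+2) := by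
        apply mul_le_mul_of_nonneg_right (by linarith) (by linarith)
    _ ≤ (exp 1/2)*(exp 1/2)^k := by
        apply mul_le_mul_of_nonneg_left ih (by linarith)
    _ = (exp 1/2)^(k+1:ℕ) := by rw [pow_succ]; ring

lemma Gamma_nat_add_half (j : ℕ) :
    Real.Gamma ((j:ℝ) + 1/2) = (2*j).factorial / (4^j * j.factorial) * Real.sqrt π := by
  induction j with
  | zero => norm_num [← Real.Gamma_one_half_eq]
  | succ j ih =>
    have hne : ((j:ℝ) + 1/2) ≠ 0 := by positivity
    have h1 : ((j+1:ℕ):ℝ) + 1/2 = ((j:ℝ)+1/2) + 1 := by push_cast; ring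
    rw [h1, Real.Gamma_add_one hne, ih]
    have h2 : 2*(j+1) = (2*j+1)+1 := by ring
    rw [h2, Nat.factorial_succ, Nat.factorial_succ, Nat.factorial_succ]
    have h4 : (0:ℝ) < 4^j := by positivity
    have hf : (0:ℝ) < (j.factorial : ℝ) := by exact_mod_cast j.factorial_pos
    push_cast
    field_simp
    ring

lemma tail_key (m : ℕ) (hm : 0 < m) (A G : ℝ) (hA : 0 ≤ A) (hG : 0 < G)
    (h : A^(m+1) < G^m * Real.sqrt π) :
    1/G * A ^ (((m:ℝ)+1)/(m:ℝ)) / π ^ ((1:ℝ)/(2*(m:ℝ))) < 1 := by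
  have hm' : (0:ℝ) < m := by exact_mod_cast hm
  have hpi := Real.pi_pos
  have hs : (0:ℝ) < π ^ ((1:ℝ)/(2*(m:ℝ))) := Real.rpow_pos_of_pos hpi _
  have key : A ^ (((m:ℝ)+1)/(m:ℝ)) < G * π ^ ((1:ℝ)/(2*(m:ℝ))) := by
    have hb : (0:ℝ) ≤ G * π ^ ((1:ℝ)/(2*(m:ℝ))) := by positivity
    refine lt_of_pow_lt_pow_left₀ m hb ?_
    have e1 : (A ^ (((m:ℝ)+1)/(m:ℝ)))^m = A^(m+1) := by
      rw [← Real.rpow_natCast (A ^ (((m:ℝ)+1)/(m:ℝ))) m, ← Real.rpow_mul hA]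
      rw [show ((m:ℝ)+1)/(m:ℝ) * (m:ℕ) = (m:ℝ)+1 by field_simp]
      rw [show ((m:ℝ)+1) = ((m+1:ℕ):ℝ) by push_cast; ring, Real.rpow_natCast]
    have e2 : (G * π ^ ((1:ℝ)/(2*(m:ℝ))))^m = G^m * Real.sqrt π := by
      rw [mul_pow, ← Real.rpow_natCast (π ^ ((1:ℝ)/(2*(m:ℝ)))) m, ← Real.rpow_mul hpi.le]
      rw [show (1:ℝ)/(2*(m:ℝ)) * (m:ℕ) = 1/2 by field_simp]
      rw [← Real.sqrt_eq_rpow]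
    rw [e1, e2]; exact h
  calc 1/G * A ^ (((m:ℝ)+1)/(m:ℝ)) / π ^ ((1:ℝ)/(2*(m:ℝ)))
      = A ^ (((m:ℝ)+1)/(m:ℝ)) / (G * π ^ ((1:ℝ)/(2*(m:ℝ)))) := by
        field_simp
  _ < 1 := by
        rw [div_lt_one (by positivity)]; exact key

lemma tail_key' (m : ℕ) (e s A G : ℝ) (hm : 0 < m)
    (he : e = ((m:ℝ)+1)/(m:ℝ)) (hs : s = (1:ℝ)/(2*(m:ℝ)))
    (hA : 0 ≤ A) (hG : 0 < G)
    (h : A^(m+1) < G^m * Real.sqrt π) :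
    1/G * A ^ e / π ^ s < 1 := by
  subst he; subst hs; exact tail_key m hm A G hA hG h

lemma case_key' (m : ℕ) (e s A G y p : ℝ) (hm : 0 < m)
    (he : e = ((m:ℝ)+1)/(m:ℝ)) (hs : s = (1:ℝ)/(2*(m:ℝ)))
    (hA : 0 ≤ A) (hG : 0 < G) (hy0 : 0 ≤ y) (hy : A ≤ y^m)
    (hp : 0 ≤ p) (hpi : p^(2*m) ≤ π) (hfin : A*y < G*p) :
    1/G * A ^ e / π ^ s < 1 := by
  refine tail_key' m e s A G hm he hs hA hG ?_
  calc A^(m+1) = A^m * A := by rw [pow_succ]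
  _ ≤ A^m * y^m := mul_le_mul_of_nonneg_left hy (pow_nonneg hA m)
  _ = (A*y)^m := (mul_pow A y m).symm
  _ < (G*p)^m := by
      apply pow_lt_pow_left₀ hfin (by positivity)
      omega
  _ = G^m * p^m := mul_pow G p m
  _ ≤ G^m * Real.sqrt π := by
      apply mul_le_mul_of_nonneg_left _ (pow_nonneg hG.le m)
      rw [show (2*m) = m*2 from by ring, pow_mul] at hpi
      exact (Real.le_sqrt (pow_nonneg hp m) Real.pi_pos.le).mpr hpi

lemma f6 : Nat.factorial 6 = 720 := by decide
lemma f7 : Nat.factorial 7 = 5040 := by decide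
lemma f8 : Nat.factorial 8 = 40320 := by decide
lemma f9 : Nat.factorial 9 = 362880 := by decide
lemma f10 : Nat.factorial 10 = 3628800 := by decide
lemma f11 : Nat.factorial 11 = 39916800 := by decide
lemma f12 : Nat.factorial 12 = 479001600 := by decide
lemma f14 : Nat.factorial 14 = 87178291200 := by decide
lemma f16 : Nat.factorial 16 = 20922789888000 := by decide
lemma f18 : Nat.factorial 18 = 6402373705728000 := by decide
lemma f20 : Nat.factorial 20 = 2432902008176640000 := by decide
lemma f22 : Nat.factorial 22 = 1124000727777607680000 := by decide


set_option maxHeartbeats 4000000 in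
theorem busemann_petty_surface_counterexample (n : ℕ) (hn : 14 ≤ n) :
    (1 / (n * Real.Gamma (n / 2))) *
        (((n - 2) * Real.sqrt 2 + 1) * Real.Gamma ((n - 1) / 2)) ^ (((n : ℝ) - 1) / ((n : ℝ) - 2)) /
        π ^ ((1 : ℝ) / (2 * ((n : ℝ) - 2))) < 1 := by
  by_cases h24 : n < 24
  · interval_cases n
    · -- n = 14
      simp only [Nat.cast_ofNat]
      rw [show ((14:ℝ)-1)/2 = ((6:ℕ):ℝ)+1/2 by norm_num, _root_.Gamma_nat_add_half,
         show ((2*6:ℕ).factorial:ℝ) / (4^(6:ℕ) * ((6:ℕ).factorial:ℝ)) = 10395/64 from by norm_num [f6, f12],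
         show ((14:ℝ))/2 = ((6:ℕ):ℝ)+1 by norm_num, Real.Gamma_nat_eq_factorial,
         show (((6:ℕ).factorial:ℝ)) = 720 from by norm_num [f6]]
      have hAub : (((14:ℝ)-2) * Real.sqrt 2 + 1) * (10395/64 * Real.sqrt π) ≤ 51734611/10000 := by
        have h1 := s2u; have h2 := spu
        calc (((14:ℝ)-2) * Real.sqrt 2 + 1) * (10395/64 * Real.sqrt π)
            ≤ (((14:ℝ)-2) * 1.4142136 + 1) * (10395/64 * 1.772454) := by gcongr
        _ ≤ 51734611/10000 := by norm_num
      apply case_key' 12 _ _ _ _ (2040323/1000000) (1048643/1000000) (by norm_num)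
        (by norm_num) (by norm_num) (by positivity) (by norm_num) (by norm_num)
      · exact hAub.trans (by norm_num)
      · norm_num
      · calc ((1048643/1000000:ℝ))^(2*12) ≤ 3.141592 := by norm_num
        _ ≤ π := by nlinarith [Real.pi_gt_d6]
      · calc (((14:ℝ)-2) * Real.sqrt 2 + 1) * (10395/64 * Real.sqrt π) * (2040323/1000000)
            ≤ (51734611/10000:ℝ) * (2040323/1000000) := mul_le_mul_of_nonneg_right hAub (by norm_num)
        _ < 14 * 720 * (1048643/1000000) := by norm_num
    · -- n = 15
      simp only [Nat.cast_ofNat]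
      rw [show ((15:ℝ))/2 = ((7:ℕ):ℝ)+1/2 by norm_num, _root_.Gamma_nat_add_half,
         show ((2*7:ℕ).factorial:ℝ) / (4^(7:ℕ) * ((7:ℕ).factorial:ℝ)) = 135135/128 from by norm_num [f7, f14],
         show ((15:ℝ)-1)/2 = ((6:ℕ):ℝ)+1 by norm_num, Real.Gamma_nat_eq_factorial,
         show (((6:ℕ).factorial:ℝ)) = 720 from by norm_num [f6]]
      have hAub : (((15:ℝ)-2) * Real.sqrt 2 + 1) * 720 ≤ 139570393/10000 := by
        have h1 := s2u
        calc (((15:ℝ)-2) * Real.sqrt 2 + 1) * 720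
            ≤ (((15:ℝ)-2) * 1.4142136 + 1) * 720 := by gcongr
        _ ≤ 139570393/10000 := by norm_num
      apply case_key' 13 _ _ _ _ (1042359/500000) (522401/500000) (by norm_num)
        (by norm_num) (by norm_num) (by positivity) (by positivity) (by norm_num)
      · exact hAub.trans (by norm_num)
      · norm_num
      · calc ((522401/500000:ℝ))^(2*13) ≤ 3.141592 := by norm_num
        _ ≤ π := by nlinarith [Real.pi_gt_d6]
      · have h2 := spl
        calc (((15:ℝ)-2) * Real.sqrt 2 + 1) * 720 * (1042359/500000)
            ≤ (139570393/10000:ℝ) * (1042359/500000) := mul_le_mul_of_nonneg_right hAub (by norm_num)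
        _ < 15 * (135135/128 * 1.772453) * (522401/500000) := by norm_num
        _ ≤ 15 * (135135/128 * Real.sqrt π) * (522401/500000) := by gcongr
    · -- n = 16
      simp only [Nat.cast_ofNat]
      rw [show ((16:ℝ)-1)/2 = ((7:ℕ):ℝ)+1/2 by norm_num, _root_.Gamma_nat_add_half,
         show ((2*7:ℕ).factorial:ℝ) / (4^(7:ℕ) * ((7:ℕ).factorial:ℝ)) = 135135/128 from by norm_num [f7, f14],
         show ((16:ℝ))/2 = ((7:ℕ):ℝ)+1 by norm_num, Real.Gamma_nat_eq_factorial,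
         show (((7:ℕ).factorial:ℝ)) = 5040 from by norm_num [f7]]
      have hAub : (((16:ℝ)-2) * Real.sqrt 2 + 1) * (135135/128 * Real.sqrt π) ≤ 389202037/10000 := by
        have h1 := s2u; have h2 := spu
        calc (((16:ℝ)-2) * Real.sqrt 2 + 1) * (135135/128 * Real.sqrt π)
            ≤ (((16:ℝ)-2) * 1.4142136 + 1) * (135135/128 * 1.772454) := by gcongr
        _ ≤ 389202037/10000 := by norm_num
      apply case_key' 14 _ _ _ _ (532141/250000) (520761/500000) (by norm_num)
        (by norm_num) (by norm_num) (by positivity) (by norm_num) (by norm_num)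
      · exact hAub.trans (by norm_num)
      · norm_num
      · calc ((520761/500000:ℝ))^(2*14) ≤ 3.141592 := by norm_num
        _ ≤ π := by nlinarith [Real.pi_gt_d6]
      · calc (((16:ℝ)-2) * Real.sqrt 2 + 1) * (135135/128 * Real.sqrt π) * (532141/250000)
            ≤ (389202037/10000:ℝ) * (532141/250000) := mul_le_mul_of_nonneg_right hAub (by norm_num)
        _ < 16 * 5040 * (520761/500000) := by norm_num
    · -- n = 17
      simp only [Nat.cast_ofNat]
      rw [show ((17:ℝ))/2 = ((8:ℕ):ℝ)+1/2 by norm_num, _root_.Gamma_nat_add_half,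
         show ((2*8:ℕ).factorial:ℝ) / (4^(8:ℕ) * ((8:ℕ).factorial:ℝ)) = 2027025/256 from by norm_num [f8, f16],
         show ((17:ℝ)-1)/2 = ((7:ℕ):ℝ)+1 by norm_num, Real.Gamma_nat_eq_factorial,
         show (((7:ℕ).factorial:ℝ)) = 5040 from by norm_num [f7]]
      have hAub : (((17:ℝ)-2) * Real.sqrt 2 + 1) * 5040 ≤ 559772741/5000 := by
        have h1 := s2u
        calc (((17:ℝ)-2) * Real.sqrt 2 + 1) * 5040
            ≤ (((17:ℝ)-2) * 1.4142136 + 1) * 5040 := by gcongr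
        _ ≤ 559772741/5000 := by norm_num
      apply case_key' 15 _ _ _ _ (10859/5000) (1038687/1000000) (by norm_num)
        (by norm_num) (by norm_num) (by positivity) (by positivity) (by norm_num)
      · exact hAub.trans (by norm_num)
      · norm_num
      · calc ((1038687/1000000:ℝ))^(2*15) ≤ 3.141592 := by norm_num
        _ ≤ π := by nlinarith [Real.pi_gt_d6]
      · have h2 := spl
        calc (((17:ℝ)-2) * Real.sqrt 2 + 1) * 5040 * (10859/5000)
            ≤ (559772741/5000:ℝ) * (10859/5000) := mul_le_mul_of_nonneg_right hAub (by norm_num)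
        _ < 17 * (2027025/256 * 1.772453) * (1038687/1000000) := by norm_num
        _ ≤ 17 * (2027025/256 * Real.sqrt π) * (1038687/1000000) := by gcongr
    · -- n = 18
      simp only [Nat.cast_ofNat]
      rw [show ((18:ℝ)-1)/2 = ((8:ℕ):ℝ)+1/2 by norm_num, _root_.Gamma_nat_add_half,
         show ((2*8:ℕ).factorial:ℝ) / (4^(8:ℕ) * ((8:ℕ).factorial:ℝ)) = 2027025/256 from by norm_num [f8, f16],
         show ((18:ℝ))/2 = ((8:ℕ):ℝ)+1 by norm_num, Real.Gamma_nat_eq_factorial,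
         show (((8:ℕ).factorial:ℝ)) = 40320 from by norm_num [f8]]
      have hAub : (((18:ℝ)-2) * Real.sqrt 2 + 1) * (2027025/256 * Real.sqrt π) ≤ 1657984149/5000 := by
        have h1 := s2u; have h2 := spu
        calc (((18:ℝ)-2) * Real.sqrt 2 + 1) * (2027025/256 * Real.sqrt π)
            ≤ (((18:ℝ)-2) * 1.4142136 + 1) * (2027025/256 * 1.772454) := by gcongr
        _ ≤ 1657984149/5000 := by norm_num
      apply case_key' 16 _ _ _ _ (553599/250000) (1036213/1000000) (by norm_num)
        (by norm_num) (by norm_num) (by positivity) (by norm_num) (by norm_num)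
      · exact hAub.trans (by norm_num)
      · norm_num
      · calc ((1036213/1000000:ℝ))^(2*16) ≤ 3.141592 := by norm_num
        _ ≤ π := by nlinarith [Real.pi_gt_d6]
      · calc (((18:ℝ)-2) * Real.sqrt 2 + 1) * (2027025/256 * Real.sqrt π) * (553599/250000)
            ≤ (1657984149/5000:ℝ) * (553599/250000) := mul_le_mul_of_nonneg_right hAub (by norm_num)
        _ < 18 * 40320 * (1036213/1000000) := by norm_num
    · -- n = 19
      simp only [Nat.cast_ofNat]
      rw [show ((19:ℝ))/2 = ((9:ℕ):ℝ)+1/2 by norm_num, _root_.Gamma_nat_add_half,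
         show ((2*9:ℕ).factorial:ℝ) / (4^(9:ℕ) * ((9:ℕ).factorial:ℝ)) = 34459425/512 from by norm_num [f9, f18],
         show ((19:ℝ)-1)/2 = ((8:ℕ):ℝ)+1 by norm_num, Real.Gamma_nat_eq_factorial,
         show (((8:ℕ).factorial:ℝ)) = 40320 from by norm_num [f8]]
      have hAub : (((19:ℝ)-2) * Real.sqrt 2 + 1) * 40320 ≤ 100967857/100 := by
        have h1 := s2u
        calc (((19:ℝ)-2) * Real.sqrt 2 + 1) * 40320
            ≤ (((19:ℝ)-2) * 1.4142136 + 1) * 40320 := by gcongr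
        _ ≤ 100967857/100 := by norm_num
      apply case_key' 17 _ _ _ _ (2256339/1000000) (517017/500000) (by norm_num)
        (by norm_num) (by norm_num) (by positivity) (by positivity) (by norm_num)
      · exact hAub.trans (by norm_num)
      · norm_num
      · calc ((517017/500000:ℝ))^(2*17) ≤ 3.141592 := by norm_num
        _ ≤ π := by nlinarith [Real.pi_gt_d6]
      · have h2 := spl
        calc (((19:ℝ)-2) * Real.sqrt 2 + 1) * 40320 * (2256339/1000000)
            ≤ (100967857/100:ℝ) * (2256339/1000000) := mul_le_mul_of_nonneg_right hAub (by norm_num)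
        _ < 19 * (34459425/512 * 1.772453) * (517017/500000) := by norm_num
        _ ≤ 19 * (34459425/512 * Real.sqrt π) * (517017/500000) := by gcongr
    · -- n = 20
      simp only [Nat.cast_ofNat]
      rw [show ((20:ℝ)-1)/2 = ((9:ℕ):ℝ)+1/2 by norm_num, _root_.Gamma_nat_add_half,
         show ((2*9:ℕ).factorial:ℝ) / (4^(9:ℕ) * ((9:ℕ).factorial:ℝ)) = 34459425/512 from by norm_num [f9, f18],
         show ((20:ℝ))/2 = ((9:ℕ):ℝ)+1 by norm_num, Real.Gamma_nat_eq_factorial,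
         show (((9:ℕ).factorial:ℝ)) = 362880 from by norm_num [f9]]
      have hAub : (((20:ℝ)-2) * Real.sqrt 2 + 1) * (34459425/512 * Real.sqrt π) ≤ 31559831259/10000 := by
        have h1 := s2u; have h2 := spu
        calc (((20:ℝ)-2) * Real.sqrt 2 + 1) * (34459425/512 * Real.sqrt π)
            ≤ (((20:ℝ)-2) * 1.4142136 + 1) * (34459425/512 * 1.772454) := by gcongr
        _ ≤ 31559831259/10000 := by norm_num
      apply case_key' 18 _ _ _ _ (229763/100000) (516051/500000) (by norm_num)
        (by norm_num) (by norm_num) (by positivity) (by norm_num) (by norm_num)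
      · exact hAub.trans (by norm_num)
      · norm_num
      · calc ((516051/500000:ℝ))^(2*18) ≤ 3.141592 := by norm_num
        _ ≤ π := by nlinarith [Real.pi_gt_d6]
      · calc (((20:ℝ)-2) * Real.sqrt 2 + 1) * (34459425/512 * Real.sqrt π) * (229763/100000)
            ≤ (31559831259/10000:ℝ) * (229763/100000) := mul_le_mul_of_nonneg_right hAub (by norm_num)
        _ < 20 * 362880 * (516051/500000) := by norm_num
    · -- n = 21
      simp only [Nat.cast_ofNat]
      rw [show ((21:ℝ))/2 = ((10:ℕ):ℝ)+1/2 by norm_num, _root_.Gamma_nat_add_half,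
         show ((2*10:ℕ).factorial:ℝ) / (4^(10:ℕ) * ((10:ℕ).factorial:ℝ)) = 654729075/1024 from by norm_num [f10, f20],
         show ((21:ℝ)-1)/2 = ((9:ℕ):ℝ)+1 by norm_num, Real.Gamma_nat_eq_factorial,
         show (((9:ℕ).factorial:ℝ)) = 362880 from by norm_num [f9]]
      have hAub : (((21:ℝ)-2) * Real.sqrt 2 + 1) * 362880 ≤ 50567433961/5000 := by
        have h1 := s2u
        calc (((21:ℝ)-2) * Real.sqrt 2 + 1) * 362880
            ≤ (((21:ℝ)-2) * 1.4142136 + 1) * 362880 := by gcongr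
        _ ≤ 50567433961/5000 := by norm_num
      apply case_key' 19 _ _ _ _ (1169139/500000) (128797/125000) (by norm_num)
        (by norm_num) (by norm_num) (by positivity) (by positivity) (by norm_num)
      · exact hAub.trans (by norm_num)
      · norm_num
      · calc ((128797/125000:ℝ))^(2*19) ≤ 3.141592 := by norm_num
        _ ≤ π := by nlinarith [Real.pi_gt_d6]
      · have h2 := spl
        calc (((21:ℝ)-2) * Real.sqrt 2 + 1) * 362880 * (1169139/500000)
            ≤ (50567433961/5000:ℝ) * (1169139/500000) := mul_le_mul_of_nonneg_right hAub (by norm_num)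
        _ < 21 * (654729075/1024 * 1.772453) * (128797/125000) := by norm_num
        _ ≤ 21 * (654729075/1024 * Real.sqrt π) * (128797/125000) := by gcongr
    · -- n = 22
      simp only [Nat.cast_ofNat]
      rw [show ((22:ℝ)-1)/2 = ((10:ℕ):ℝ)+1/2 by norm_num, _root_.Gamma_nat_add_half,
         show ((2*10:ℕ).factorial:ℝ) / (4^(10:ℕ) * ((10:ℕ).factorial:ℝ)) = 654729075/1024 from by norm_num [f10, f20],
         show ((22:ℝ))/2 = ((10:ℕ):ℝ)+1 by norm_num, Real.Gamma_nat_eq_factorial,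
         show (((10:ℕ).factorial:ℝ)) = 3628800 from by norm_num [f10]]
      have hAub : (((22:ℝ)-2) * Real.sqrt 2 + 1) * (654729075/1024 * Real.sqrt π) ≤ 165936176927/5000 := by
        have h1 := s2u; have h2 := spu
        calc (((22:ℝ)-2) * Real.sqrt 2 + 1) * (654729075/1024 * Real.sqrt π)
            ≤ (((22:ℝ)-2) * 1.4142136 + 1) * (654729075/1024 * 1.772454) := by gcongr
        _ ≤ 165936176927/5000 := by norm_num
      apply case_key' 20 _ _ _ _ (475659/200000) (41153/40000) (by norm_num)
        (by norm_num) (by norm_num) (by positivity) (by norm_num) (by norm_num)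
      · exact hAub.trans (by norm_num)
      · norm_num
      · calc ((41153/40000:ℝ))^(2*20) ≤ 3.141592 := by norm_num
        _ ≤ π := by nlinarith [Real.pi_gt_d6]
      · calc (((22:ℝ)-2) * Real.sqrt 2 + 1) * (654729075/1024 * Real.sqrt π) * (475659/200000)
            ≤ (165936176927/5000:ℝ) * (475659/200000) := mul_le_mul_of_nonneg_right hAub (by norm_num)
        _ < 22 * 3628800 * (41153/40000) := by norm_num
    · -- n = 23
      simp only [Nat.cast_ofNat]
      rw [show ((23:ℝ))/2 = ((11:ℕ):ℝ)+1/2 by norm_num, _root_.Gamma_nat_add_half,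
         show ((2*11:ℕ).factorial:ℝ) / (4^(11:ℕ) * ((11:ℕ).factorial:ℝ)) = 13749310575/2048 from by norm_num [f11, f22],
         show ((23:ℝ)-1)/2 = ((10:ℕ):ℝ)+1 by norm_num, Real.Gamma_nat_eq_factorial,
         show (((10:ℕ).factorial:ℝ)) = 3628800 from by norm_num [f10]]
      have hAub : (((23:ℝ)-2) * Real.sqrt 2 + 1) * 3628800 ≤ 1113986645453/10000 := by
        have h1 := s2u
        calc (((23:ℝ)-2) * Real.sqrt 2 + 1) * 3628800
            ≤ (((23:ℝ)-2) * 1.4142136 + 1) * 3628800 := by gcongr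
        _ ≤ 1113986645453/10000 := by norm_num
      apply case_key' 21 _ _ _ _ (2417697/1000000) (32107/31250) (by norm_num)
        (by norm_num) (by norm_num) (by positivity) (by positivity) (by norm_num)
      · exact hAub.trans (by norm_num)
      · norm_num
      · calc ((32107/31250:ℝ))^(2*21) ≤ 3.141592 := by norm_num
        _ ≤ π := by nlinarith [Real.pi_gt_d6]
      · have h2 := spl
        calc (((23:ℝ)-2) * Real.sqrt 2 + 1) * 3628800 * (2417697/1000000)
            ≤ (1113986645453/10000:ℝ) * (2417697/1000000) := mul_le_mul_of_nonneg_right hAub (by norm_num)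
        _ < 23 * (13749310575/2048 * 1.772453) * (32107/31250) := by norm_num
        _ ≤ 23 * (13749310575/2048 * Real.sqrt π) * (32107/31250) := by gcongr
  · -- tail: n ≥ 24
    push_neg at h24
    obtain ⟨m, rfl⟩ : ∃ m, n = m + 2 := ⟨n-2, by omega⟩
    have hm22 : 22 ≤ m := by omega
    have hmpos : 0 < m := by omega
    have hmR : (22:ℝ) ≤ (m:ℝ) := by exact_mod_cast hm22
    rw [show ((m+2:ℕ):ℝ) = (m:ℝ)+2 from by push_cast; ring,
        show ((m:ℝ)+2-2) = (m:ℝ) from by ring,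
        show ((m:ℝ)+2-1) = (m:ℝ)+1 from by ring]
    have hg : 0 < Real.Gamma (((m:ℝ)+1)/2) := Real.Gamma_pos_of_pos (by linarith)
    have hGm : 0 < Real.Gamma (((m:ℝ)+2)/2) := Real.Gamma_pos_of_pos (by linarith)
    have hc : (0:ℝ) < (m:ℝ)*Real.sqrt 2 + 1 := by positivity
    apply tail_key' m _ _ _ _ hmpos (by ring) (by ring)
      (by positivity) (by positivity)
    have hW : Real.Gamma (((m:ℝ)+1)/2) * Real.sqrt ((m:ℝ)/2) ≤ Real.Gamma (((m:ℝ)+2)/2) := by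
      have h := wendel (x := (m:ℝ)/2) (by positivity)
      rw [show (m:ℝ)/2 + 1/2 = ((m:ℝ)+1)/2 from by ring,
          show (m:ℝ)/2 + 1 = ((m:ℝ)+2)/2 from by ring] at h
      exact h
    set g := Real.Gamma (((m:ℝ)+1)/2) with hgdef
    set Gm := Real.Gamma (((m:ℝ)+2)/2) with hGmdef
    set c := (m:ℝ)*Real.sqrt 2 + 1 with hcdef
    have hT' : c^(m+1) * g < ((m:ℝ)+2)^m * Real.sqrt ((m:ℝ)/2)^m * Real.sqrt π := by
      have heu : exp 1 ≤ 2.7182819 := le_of_lt (lt_trans Real.exp_one_lt_d9 (by norm_num))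
      have hsp := spl
      have hBer : (39/20:ℝ) * ((m:ℝ)+1)^m ≤ ((m:ℝ)+2)^m := by
        have hm1 : (0:ℝ) < (m:ℝ)+1 := by linarith
        have h1 : (1:ℝ) + (m:ℝ)*(1/((m:ℝ)+1)) ≤ (1+1/((m:ℝ)+1))^m :=
          one_add_mul_le_pow (by
            have : (0:ℝ) ≤ 1/((m:ℝ)+1) := by positivity
            linarith) m
        rw [mul_one_div] at h1
        have h3 : (19/20:ℝ) ≤ (m:ℝ)/((m:ℝ)+1) := by
          rw [le_div_iff₀ hm1]; linarith
        have h2 : (39/20:ℝ) ≤ (1+1/((m:ℝ)+1))^m := le_trans (by linarith) h1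
        calc (39/20:ℝ) * ((m:ℝ)+1)^m ≤ (1+1/((m:ℝ)+1))^m * ((m:ℝ)+1)^m := by
              apply mul_le_mul_of_nonneg_right h2 (by positivity)
        _ = ((1+1/((m:ℝ)+1))*((m:ℝ)+1))^m := (mul_pow _ _ m).symm
        _ = ((m:ℝ)+2)^m := by
              rw [show (1+1/((m:ℝ)+1))*((m:ℝ)+1) = (m:ℝ)+2 from by field_simp; ring]
      rcases Nat.even_or_odd m with he | ho
      · -- m even
        obtain ⟨k, hkk⟩ := he
        have hk11 : 11 ≤ k := by omega
        have hK : (11:ℝ) ≤ (k:ℝ) := by exact_mod_cast hk11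
        have hKpos : (0:ℝ) < (k:ℝ) := by linarith
        have hmK : (m:ℝ) = 2*(k:ℝ) := by rw [hkk]; push_cast; ring
        have hs1 : Real.sqrt ((m:ℝ)/2) ^ m = (k:ℝ)^k := by
          rw [show (m:ℝ)/2 = (k:ℝ) from by rw [hmK]; ring, hkk, pow_add, ← mul_pow,
              Real.mul_self_sqrt hKpos.le]
        have hgup : g ≤ exp 1 * ((k:ℝ)^k/(exp 1)^k) := by
          have hsk : (0:ℝ) < Real.sqrt k := Real.sqrt_pos.mpr hKpos
          rw [← mul_le_mul_iff_left₀ hsk]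
          have hgk : g = Real.Gamma ((k:ℝ)+1/2) := by
            rw [hgdef, hmK, show (2*(k:ℝ)+1)/2 = (k:ℝ)+1/2 from by ring]
          calc g * Real.sqrt k ≤ Real.Gamma ((k:ℝ)+1) := by rw [hgk]; exact wendel hKpos
          _ = (k.factorial:ℝ) := Real.Gamma_nat_eq_factorial k
          _ ≤ exp 1 * Real.sqrt k * ((k:ℝ)/exp 1)^k := factorial_le (by omega)
          _ = exp 1 * ((k:ℝ)^k/(exp 1)^k) * Real.sqrt k := by rw [div_pow]; ring
        have hcm : c^m ≤ 2^k * ((m:ℝ)+1)^m := by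
          calc c^m ≤ (Real.sqrt 2 * ((m:ℝ)+1))^m := by
                apply pow_le_pow_left₀ hc.le _ m
                rw [hcdef]; nlinarith [s2l]
          _ = (Real.sqrt 2)^m * ((m:ℝ)+1)^m := mul_pow _ _ m
          _ = 2^k * ((m:ℝ)+1)^m := by
              rw [hkk, pow_add, ← mul_pow, Real.mul_self_sqrt (by norm_num : (0:ℝ) ≤ 2)]
        have hexp : (2:ℝ)^k * ((23:ℝ)/10*(k:ℝ)+2) ≤ (exp 1)^k := by
          have h0 := explin hk11
          rw [div_pow, le_div_iff₀ (by positivity : (0:ℝ) < (2:ℝ)^k)] at h0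
          linarith [h0]
        have hcu : c ≤ 2.8284272*(k:ℝ)+1 := by
          rw [hcdef, hmK]; nlinarith [s2u, hKpos]
        rw [hs1]
        have epos : (0:ℝ) < (exp 1)^k := by positivity
        calc c^(m+1)*g ≤ c^(m+1) * (exp 1 * ((k:ℝ)^k/(exp 1)^k)) :=
              mul_le_mul_of_nonneg_left hgup (by positivity)
        _ = (c^m * (c * exp 1) * (k:ℝ)^k)/(exp 1)^k := by rw [pow_succ]; ring
        _ < ((m:ℝ)+2)^m * (k:ℝ)^k * Real.sqrt π := by
            rw [div_lt_iff₀ epos]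
            calc c^m * (c * exp 1) * (k:ℝ)^k
                ≤ (2^k * ((m:ℝ)+1)^m) * ((2.8284272*(k:ℝ)+1) * 2.7182819) * (k:ℝ)^k := by
                  apply mul_le_mul_of_nonneg_right _ (by positivity)
                  exact mul_le_mul hcm (mul_le_mul hcu heu (exp_pos 1).le (by positivity))
                    (by positivity) (by positivity)
            _ = (2^k * ((m:ℝ)+1)^m * (k:ℝ)^k) * ((2.8284272*(k:ℝ)+1) * 2.7182819) := by ring
            _ < (2^k * ((m:ℝ)+1)^m * (k:ℝ)^k) * ((39/20)*1.772453*((23:ℝ)/10*(k:ℝ)+2)) := by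
                  apply mul_lt_mul_of_pos_left _ (by positivity)
                  nlinarith
            _ = (((m:ℝ)+1)^m * (39/20) * 1.772453) * ((2:ℝ)^k*((23:ℝ)/10*(k:ℝ)+2)) * (k:ℝ)^k := by ring
            _ ≤ (((m:ℝ)+1)^m * (39/20) * 1.772453) * (exp 1)^k * (k:ℝ)^k := by
                  apply mul_le_mul_of_nonneg_right _ (by positivity)
                  exact mul_le_mul_of_nonneg_left hexp (by positivity)
            _ = ((39/20) * ((m:ℝ)+1)^m) * 1.772453 * (k:ℝ)^k * (exp 1)^k := by ring
            _ ≤ ((m:ℝ)+2)^m * Real.sqrt π * (k:ℝ)^k * (exp 1)^k := by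
                  apply mul_le_mul_of_nonneg_right _ epos.le
                  apply mul_le_mul_of_nonneg_right _ (by positivity)
                  exact mul_le_mul hBer hsp (by norm_num) (by positivity)
            _ = ((m:ℝ)+2)^m * (k:ℝ)^k * Real.sqrt π * (exp 1)^k := by ring
      · -- m odd
        obtain ⟨k, hkk⟩ := ho
        have hk11 : 11 ≤ k := by omega
        have hK : (11:ℝ) ≤ (k:ℝ) := by exact_mod_cast hk11
        have hKpos : (0:ℝ) < (k:ℝ) := by linarith
        have hmK : (m:ℝ) = 2*(k:ℝ)+1 := by rw [hkk]; push_cast; ring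
        have hM2pos : (0:ℝ) < (m:ℝ)/2 := by linarith
        have hs1 : Real.sqrt ((m:ℝ)/2) ^ m = ((m:ℝ)/2)^k * Real.sqrt ((m:ℝ)/2) := by
          have e1 : Real.sqrt ((m:ℝ)/2) ^ m = Real.sqrt ((m:ℝ)/2) ^ (2*k+1) :=
            congrArg (fun t => Real.sqrt ((m:ℝ)/2) ^ t) hkk
          rw [e1, pow_succ, pow_mul, Real.sq_sqrt hM2pos.le]
        have hgk : g = (k.factorial:ℝ) := by
          rw [hgdef, hmK, show (2*(k:ℝ)+1+1)/2 = (k:ℝ)+1 from by ring,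
            Real.Gamma_nat_eq_factorial]
        have hcm : c^m ≤ 2^k * (1.4142136 * ((m:ℝ)+1)^m) := by
          calc c^m ≤ (Real.sqrt 2 * ((m:ℝ)+1))^m := by
                apply pow_le_pow_left₀ hc.le _ m
                rw [hcdef]; nlinarith [s2l]
          _ = (Real.sqrt 2)^m * ((m:ℝ)+1)^m := mul_pow _ _ m
          _ = 2^k * Real.sqrt 2 * ((m:ℝ)+1)^m := by
              have e1 : (Real.sqrt 2)^m = (Real.sqrt 2)^(2*k+1) :=
                congrArg (fun t => (Real.sqrt 2) ^ t) hkk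
              rw [e1, pow_succ, pow_mul, Real.sq_sqrt (by norm_num : (0:ℝ) ≤ 2)]
          _ ≤ 2^k * (1.4142136 * ((m:ℝ)+1)^m) := by
              rw [mul_assoc]
              apply mul_le_mul_of_nonneg_left _ (by positivity)
              exact mul_le_mul_of_nonneg_right s2u (by positivity)
        have hhalf : (3/2:ℝ)*(k:ℝ)^k ≤ ((m:ℝ)/2)^k := by
          have h1 : (1:ℝ) + (k:ℝ)*(1/(2*(k:ℝ))) ≤ (1+1/(2*(k:ℝ)))^k :=
            one_add_mul_le_pow (by
              have : (0:ℝ) ≤ 1/(2*(k:ℝ)) := by positivity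
              linarith) k
          have h2 : (k:ℝ)*(1/(2*(k:ℝ))) = 1/2 := by
            field_simp
          rw [h2] at h1
          calc (3/2:ℝ)*(k:ℝ)^k ≤ (1+1/(2*(k:ℝ)))^k * (k:ℝ)^k := by
                apply mul_le_mul_of_nonneg_right _ (by positivity)
                linarith
          _ = ((1+1/(2*(k:ℝ)))*(k:ℝ))^k := (mul_pow _ _ k).symm
          _ = ((m:ℝ)/2)^k := by
              rw [show (1+1/(2*(k:ℝ)))*(k:ℝ) = (k:ℝ)+1/2 from by field_simp,
                show ((m:ℝ))/2 = (k:ℝ)+1/2 from by rw [hmK]; ring]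
        have hsqK : Real.sqrt (k:ℝ) ≤ Real.sqrt ((m:ℝ)/2) := by
          apply Real.sqrt_le_sqrt; rw [hmK]; linarith
        have hexp : (2:ℝ)^k * ((23:ℝ)/10*(k:ℝ)+2) ≤ (exp 1)^k := by
          have h0 := explin hk11
          rw [div_pow, le_div_iff₀ (by positivity : (0:ℝ) < (2:ℝ)^k)] at h0
          linarith [h0]
        have hcu : c ≤ 2.8284272*(k:ℝ)+2.4142136 := by
          rw [hcdef, hmK]; nlinarith [s2u, hKpos]
        rw [hs1]
        have epos : (0:ℝ) < (exp 1)^k := by positivity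
        calc c^(m+1)*g = c^(m+1)*(k.factorial:ℝ) := by rw [hgk]
        _ ≤ c^(m+1) * (exp 1 * Real.sqrt (k:ℝ) * ((k:ℝ)/exp 1)^k) :=
              mul_le_mul_of_nonneg_left (factorial_le (by omega)) (by positivity)
        _ = (c^m * (c * exp 1) * Real.sqrt (k:ℝ) * (k:ℝ)^k)/(exp 1)^k := by
              rw [pow_succ, div_pow]; ring
        _ < ((m:ℝ)+2)^m * (((m:ℝ)/2)^k * Real.sqrt ((m:ℝ)/2)) * Real.sqrt π := by
            rw [div_lt_iff₀ epos]
            calc c^m * (c * exp 1) * Real.sqrt (k:ℝ) * (k:ℝ)^k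
                ≤ (2^k * (1.4142136 * ((m:ℝ)+1)^m)) * ((2.8284272*(k:ℝ)+2.4142136) * 2.7182819) * Real.sqrt (k:ℝ) * (k:ℝ)^k := by
                  apply mul_le_mul_of_nonneg_right _ (by positivity)
                  apply mul_le_mul_of_nonneg_right _ (Real.sqrt_nonneg _)
                  exact mul_le_mul hcm (mul_le_mul hcu heu (exp_pos 1).le (by positivity))
                    (by positivity) (by positivity)
            _ = (((m:ℝ)+1)^m * Real.sqrt (k:ℝ) * (k:ℝ)^k * 2^k) * (1.4142136 * ((2.8284272*(k:ℝ)+2.4142136) * 2.7182819)) := by ring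
            _ < (((m:ℝ)+1)^m * Real.sqrt (k:ℝ) * (k:ℝ)^k * 2^k) * ((39/20) * 1.772453 * (3/2) * ((23:ℝ)/10*(k:ℝ)+2)) := by
                  apply mul_lt_mul_of_pos_left _ (by positivity)
                  nlinarith
            _ = ((39/20) * ((m:ℝ)+1)^m) * 1.772453 * ((3/2)*(k:ℝ)^k) * Real.sqrt (k:ℝ) * ((2:ℝ)^k * ((23:ℝ)/10*(k:ℝ)+2)) := by ring
            _ ≤ ((m:ℝ)+2)^m * Real.sqrt π * ((m:ℝ)/2)^k * Real.sqrt ((m:ℝ)/2) * (exp 1)^k := by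
                  gcongr
                  all_goals first | exact hBer | exact hsp | exact hhalf | exact hsqK | exact hexp | positivity
            _ = ((m:ℝ)+2)^m * (((m:ℝ)/2)^k * Real.sqrt ((m:ℝ)/2)) * Real.sqrt π * (exp 1)^k := by ring
    calc ((c * g)^(m+1)) = (c^(m+1)*g) * g^m := by rw [mul_pow]; ring
    _ < (((m:ℝ)+2)^m * Real.sqrt ((m:ℝ)/2)^m * Real.sqrt π) * g^m :=
        mul_lt_mul_of_pos_right hT' (pow_pos hg m)
    _ = (((m:ℝ)+2)^m * (g * Real.sqrt ((m:ℝ)/2))^m) * Real.sqrt π := by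
        rw [mul_pow]; ring
    _ ≤ (((m:ℝ)+2)^m * Gm^m) * Real.sqrt π := by
        have h5 := pow_le_pow_left₀ (by positivity : (0:ℝ) ≤ g * Real.sqrt ((m:ℝ)/2)) hW m
        exact mul_le_mul_of_nonneg_right (mul_le_mul_of_nonneg_left h5 (by positivity)) (Real.sqrt_nonneg π)
    _ = (((m:ℝ)+2) * Gm)^m * Real.sqrt π := by rw [mul_pow]
end
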